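/- arXiv:1910.13472 — 10 statements merged into one kernel-verified Lean document; each statement's English description precedes it below -/
import Mathlib

section
/- Let F_q be a finite field and let C ⊆ F_q^n be a linear code of dimension k ≥ 1. Let r ≥ 1 and suppose the coordinate set {1,…,n} is partitioned into disjoint blocks, each of size r+1, such that for every coordinate i, any two codewords c, c′ ∈ C that agree on all coordinates of the block containing i other than i itself also satisfy c_i = c′_i. Then the minimum distance d of C satisfies d ≤ n − k − ⌈k/r⌉ + 2; equivalently, there exists a nonzero codeword of Hamming weight at most n − k − ⌈k/r⌉ + 2. -/
/-!
Let `K(S)` (`vanishingOn C S`) be the subcode of codewords vanishing on a coordinate set `S`.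
Imposing vanishing on `m` further coordinates costs at most `m` dimensions, and on a whole block
of size `r + 1` at most `r`, since the last coordinate of a block is recovered from the others.
Adjoining blocks greedily as long as `dim K(S) > r` yields a union `S` of `t` blocks with
`1 ≤ dim K(S) =: δ ≤ r` and `k ≤ t r + δ`, so `⌈k / r⌉ ≤ t + 1`. Imposing vanishing on `δ - 1`
more coordinates leaves a nonzero codeword, which vanishes on
`t (r + 1) + δ - 1 ≥ k + ⌈k / r⌉ - 2` coordinates.
-/

open Finset Module

namespace LinearCode

variable {F ι κ : Type*} [Field F]

def vanishingOn (C : Submodule F (ι → F)) (S : Finset ι) : Submodule F (ι → F) :=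
  C ⊓ Submodule.pi (S : Set ι) fun _ => ⊥

section VanishingOn

variable (C : Submodule F (ι → F))

theorem mem_vanishingOn {S : Finset ι} {c : ι → F} :
    c ∈ vanishingOn C S ↔ c ∈ C ∧ ∀ j ∈ S, c j = 0 := by
  simp [vanishingOn, Submodule.mem_pi]

theorem vanishingOn_le (S : Finset ι) : vanishingOn C S ≤ C := inf_le_left

theorem vanishingOn_empty : vanishingOn C ∅ = C := by
  ext c
  simp [mem_vanishingOn]

theorem vanishingOn_univ [Fintype ι] : vanishingOn C univ = ⊥ := by
  ext c
  simp only [mem_vanishingOn, mem_univ, true_implies, Submodule.mem_bot]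
  exact ⟨fun h => funext h.2, fun h => h ▸ ⟨C.zero_mem, fun _ => rfl⟩⟩

theorem vanishingOn_vanishingOn [DecidableEq ι] (S T : Finset ι) :
    vanishingOn (vanishingOn C S) T = vanishingOn C (S ∪ T) := by
  ext c
  simp only [mem_vanishingOn, mem_union]
  grind

variable [Fintype ι]

theorem finrank_le_finrank_vanishingOn_add_card (T : Finset ι) :
    finrank F C ≤ finrank F (vanishingOn C T) + #T := by
  let restrict : C →ₗ[F] (T → F) := LinearMap.funLeft F F ((↑) : T → ι) ∘ₗ C.subtype
  have hker : LinearMap.ker restrict = (vanishingOn C T).comap C.subtype := by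
    ext c
    simp [restrict, mem_vanishingOn, funext_iff]
  have hrange : finrank F (LinearMap.range restrict) ≤ #T := by
    simpa using (LinearMap.range restrict).finrank_le
  have hrank := LinearMap.finrank_range_add_finrank_ker restrict
  rw [hker, (Submodule.comapSubtypeEquivOfLe (vanishingOn_le C T)).finrank_eq] at hrank
  omega

variable [DecidableEq ι]

theorem finrank_vanishingOn_le_card_compl (S : Finset ι) :
    finrank F (vanishingOn C S) ≤ #Sᶜ := by
  have := finrank_le_finrank_vanishingOn_add_card (vanishingOn C S) Sᶜ
  rwa [vanishingOn_vanishingOn, union_compl, vanishingOn_univ, finrank_bot, zero_add] at this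

theorem finrank_vanishingOn_le_of_recoverable (S : Finset ι) {B : Finset ι} {i : ι} (hi : i ∈ B)
    (hrec : ∀ c ∈ C, (∀ j ∈ B.erase i, c j = 0) → c i = 0) :
    finrank F (vanishingOn C S) ≤ finrank F (vanishingOn C (S ∪ B)) + (#B - 1) := by
  have heq : vanishingOn C (S ∪ B.erase i) = vanishingOn C (S ∪ B) := by
    ext c
    simp only [mem_vanishingOn, mem_union, mem_erase]
    refine ⟨fun ⟨hc, h⟩ => ⟨hc, fun j hj => ?_⟩, fun ⟨hc, h⟩ => ⟨hc, fun j hj => h j (by tauto)⟩⟩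
    by_cases hji : j = i
    · exact hji ▸ hrec c hc fun j hj => h j (Or.inr (mem_erase.1 hj))
    · exact h j (by tauto)
  have := finrank_le_finrank_vanishingOn_add_card (vanishingOn C S) (B.erase i)
  rwa [vanishingOn_vanishingOn, heq, card_erase_of_mem hi] at this

end VanishingOn

variable [Fintype ι]

theorem hammingNorm_add_card_le [DecidableEq ι] [DecidableEq F] {c : ι → F} {U : Finset ι}
    (hc : ∀ j ∈ U, c j = 0) : hammingNorm c + #U ≤ Fintype.card ι := by
  have hsupp : ({j | c j ≠ 0} : Finset ι) ⊆ Uᶜ := fun j hj =>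
    mem_compl.2 fun hjU => (mem_filter.1 hj).2 (hc j hjU)
  have := card_le_card hsupp
  rw [card_compl] at this
  unfold hammingNorm
  have := card_le_univ U
  omega

/-- A Singleton bound for the shortened code `vanishingOn C S`. -/
theorem exists_ne_zero_hammingNorm_add_card_add_finrank_le [DecidableEq ι] [DecidableEq F]
    (C : Submodule F (ι → F)) (S : Finset ι) (hS : 1 ≤ finrank F (vanishingOn C S)) :
    ∃ c ∈ C, c ≠ 0 ∧
      hammingNorm c + #S + finrank F (vanishingOn C S) ≤ Fintype.card ι + 1 := by
  obtain ⟨T, hTS, hT⟩ := exists_subset_card_eq (s := Sᶜ)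
    (n := finrank F (vanishingOn C S) - 1) (by have := finrank_vanishingOn_le_card_compl C S; omega)
  have hST : 1 ≤ finrank F (vanishingOn C (S ∪ T)) := by
    have := finrank_le_finrank_vanishingOn_add_card (vanishingOn C S) T
    rw [vanishingOn_vanishingOn, hT] at this
    omega
  obtain ⟨c, hc, hc0⟩ := Submodule.exists_mem_ne_zero_of_ne_bot
    (Submodule.one_le_finrank_iff.1 hST)
  rw [mem_vanishingOn] at hc
  have hcard : #(S ∪ T) = #S + #T :=
    card_union_of_disjoint (disjoint_left.2 fun j hjS hjT => mem_compl.1 (hTS hjT) hjS)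
  have := hammingNorm_add_card_le hc.2
  exact ⟨c, hc.1, hc0, by omega⟩

section Blocks

variable [DecidableEq κ] (blk : ι → κ)

def block (i : ι) : Finset ι := {j | blk j = blk i}

theorem mem_block {i j : ι} : j ∈ block blk i ↔ blk j = blk i := by
  simp [block]

theorem mem_block_self (i : ι) : i ∈ block blk i := (mem_block blk).2 rfl

theorem block_eq_of_mem {i j : ι} (h : j ∈ block blk i) : block blk j = block blk i := by
  ext l
  simp only [mem_block] at h ⊢
  rw [h]

theorem disjoint_block_of_not_mem [DecidableEq ι] {S : Finset ι}
    (hS : ∀ j ∈ S, block blk j ⊆ S) {i : ι} (hi : i ∉ S) : Disjoint S (block blk i) :=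
  disjoint_left.2 fun j hjS hji =>
    hi (hS j hjS ((mem_block blk).2 ((mem_block blk).1 hji).symm))

/-- Take `S` a largest union of `t` blocks with `1 ≤ dim K(S)` and `k ≤ t r + dim K(S)`: if
`dim K(S) > r`, adjoining one more block, which costs at most `r` dimensions, contradicts
maximality. -/
theorem exists_blockUnion_finrank_vanishingOn_le [DecidableEq ι] (C : Submodule F (ι → F))
    {r : ℕ}
    (hblk : ∀ i, #(block blk i) = r + 1)
    (hrec : ∀ i, ∀ c ∈ C, (∀ j ∈ (block blk i).erase i, c j = 0) → c i = 0)
    (hC : 1 ≤ finrank F C) :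
    ∃ (S : Finset ι) (t : ℕ), #S = t * (r + 1) ∧ 1 ≤ finrank F (vanishingOn C S) ∧
      finrank F (vanishingOn C S) ≤ r ∧ finrank F C ≤ t * r + finrank F (vanishingOn C S) := by
  classical
  let P : ℕ → Prop := fun t => ∃ S : Finset ι, (∀ j ∈ S, block blk j ⊆ S) ∧
    #S = t * (r + 1) ∧ 1 ≤ finrank F (vanishingOn C S) ∧
    finrank F C ≤ t * r + finrank F (vanishingOn C S)
  have hP0 : P 0 := ⟨∅, by simp, by simp, by rwa [vanishingOn_empty],
    by rw [vanishingOn_empty, zero_mul, zero_add]⟩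
  have hP_le : ∀ t, P t → t ≤ Fintype.card ι := fun t ⟨S, _, hS, _⟩ =>
    calc t ≤ t * (r + 1) := Nat.le_mul_of_pos_right t r.succ_pos
      _ = #S := hS.symm
      _ ≤ Fintype.card ι := card_le_univ S
  obtain ⟨S, hSblk, hScard, hSpos, hSk⟩ := Nat.findGreatest_spec (Nat.zero_le _) hP0
  refine ⟨S, Nat.findGreatest P (Fintype.card ι), hScard, hSpos, ?_, hSk⟩
  by_contra! hlarge
  obtain ⟨i, hi⟩ : ∃ i, i ∉ S := by
    by_contra! hS
    rw [eq_univ_of_forall hS, vanishingOn_univ, finrank_bot] at hSpos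
    omega
  have hdisj := disjoint_block_of_not_mem blk hSblk hi
  have hdrop := finrank_vanishingOn_le_of_recoverable C S (mem_block_self blk i) (hrec i)
  rw [hblk, Nat.add_sub_cancel] at hdrop
  have hnext : P (Nat.findGreatest P (Fintype.card ι) + 1) := by
    refine ⟨S ∪ block blk i, fun j hj => ?_, ?_, by omega, by rw [add_one_mul]; omega⟩
    · rcases mem_union.1 hj with hj | hj
      · exact (hSblk j hj).trans subset_union_left
      · exact (block_eq_of_mem blk hj).le.trans subset_union_right
    · rw [card_union_of_disjoint hdisj, hScard, hblk, add_one_mul]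
  exact Nat.findGreatest_is_greatest (Nat.lt_succ_self _) (hP_le _ hnext) hnext

end Blocks

end LinearCode

open LinearCode in
theorem stmt_0_general
    (F : Type) [Field F] [DecidableEq F]
    (n : ℕ) (C : Submodule F (Fin n → F))
    (k : ℕ) (hk : k = Module.finrank F C) (hk1 : 1 ≤ k)
    (r : ℕ) (hr : 1 ≤ r)
    (ι : Type) [DecidableEq ι] (blk : Fin n → ι)
    -- every block (i.e. every fiber of `blk` containing a coordinate) has size r + 1
    (hblk : ∀ i : Fin n,
      (Finset.univ.filter (fun j : Fin n => blk j = blk i)).card = r + 1)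
    -- local recoverability: the value at coordinate i of a codeword is determined by
    -- the values at the other coordinates of the block containing i
    (hrec : ∀ i : Fin n, ∀ c c' : Fin n → F, c ∈ C → c' ∈ C →
      (∀ j : Fin n, blk j = blk i → j ≠ i → c j = c' j) → c i = c' i) :
    ∃ c : Fin n → F, c ∈ C ∧ c ≠ 0 ∧
      (hammingNorm c : ℤ) ≤ (n : ℤ) - k - ⌈(k : ℚ) / (r : ℚ)⌉ + 2 := by
  have hrec₀ : ∀ i, ∀ c ∈ C, (∀ j ∈ (block blk i).erase i, c j = 0) → c i = 0 :=
    fun i c hc hvan => by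
      simpa using hrec i c 0 hc C.zero_mem fun j hj hji =>
        hvan j (mem_erase.2 ⟨hji, (mem_block blk).2 hj⟩)
  obtain ⟨S, t, hcard, hpos, hsmall, hkt⟩ :=
    exists_blockUnion_finrank_vanishingOn_le blk C hblk hrec₀ (hk ▸ hk1)
  obtain ⟨c, hc, hc0, hwt⟩ := exists_ne_zero_hammingNorm_add_card_add_finrank_le C S hpos
  refine ⟨c, hc, hc0, ?_⟩
  have hceil : ⌈(k : ℚ) / r⌉ ≤ t + 1 := by
    rw [Int.ceil_le, div_le_iff₀ (by exact_mod_cast hr)]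
    exact_mod_cast (show k ≤ (t + 1) * r by rw [add_one_mul]; omega)
  rw [Fintype.card_fin] at hwt
  have hwt' : hammingNorm c + t * (r + 1) + finrank F C ≤ n + 1 + t * r := by
    rw [← hcard]
    omega
  zify at hwt'
  subst hk
  linarith

/-- Singleton-type bound for locally recoverable codes whose recovery
sets come from a partition of the coordinates into blocks of size `r + 1`. -/
theorem stmt_0
    (F : Type) [Field F] [Fintype F] [DecidableEq F]
    (n : ℕ) (C : Submodule F (Fin n → F))
    (k : ℕ) (hk : k = Module.finrank F C) (hk1 : 1 ≤ k)
    (r : ℕ) (hr : 1 ≤ r)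
    (ι : Type) [DecidableEq ι] (blk : Fin n → ι)
    -- every block (i.e. every fiber of `blk` containing a coordinate) has size r + 1
    (hblk : ∀ i : Fin n,
      (Finset.univ.filter (fun j : Fin n => blk j = blk i)).card = r + 1)
    -- local recoverability: the value at coordinate i of a codeword is determined by
    -- the values at the other coordinates of the block containing i
    (hrec : ∀ i : Fin n, ∀ c c' : Fin n → F, c ∈ C → c' ∈ C →
      (∀ j : Fin n, blk j = blk i → j ≠ i → c j = c' j) → c i = c' i) :
    ∃ c : Fin n → F, c ∈ C ∧ c ≠ 0 ∧
      (hammingNorm c : ℤ) ≤ (n : ℤ) - k - ⌈(k : ℚ) / (r : ℚ)⌉ + 2 :=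
  stmt_0_general F n C k hk hk1 r hr ι blk hblk hrec
end

section
/- Fix a baseline configuration with b − M ≥ 1 and b − N ≥ 1. Then the evaluation map ev : V[M,N] → F_q^n, σ ↦ (σ(P_{i,j}; t_i))_{1≤i≤b, 1≤j≤r+1}, is injective; consequently the baseline code C = ev(V[M,N]) has dimension k = (M+1) + (r−1)(N+1). -/
/-!
In the fibre over `tᵢ`, the `r` vectors `(1, P_{i,j'})`, `j' ≠ j`, are linearly independent in the
`r`-dimensional space `F × F^{r-1}`, hence a basis, so an affine function `α + ∑ βℓ xℓ` is
determined by its values at the points `P_{i,j'}`. Thus a codeword determines the values of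
`a₀, …, a_{r-1}` at every `tᵢ`, and since these polynomials have degree `< b`, it determines the
polynomials themselves. The evaluation map is therefore injective on
`V[M,N] ≅ F[X]_{<M+1} × (F[X]_{<N+1})^{r-1}`, which gives the dimension.
-/

open Polynomial

variable {F : Type*} [Field F]

theorem Polynomial.mem_degreeLT_succ_iff {R : Type*} [Semiring R] {p : R[X]} {n : ℕ} :
    p ∈ degreeLT R (n + 1) ↔ p.degree ≤ n := by
  rw [degreeLT_succ_eq_degreeLE, mem_degreeLE]

theorem Polynomial.eq_of_degree_le_of_forall_eval_eq {ι : Type*} [Fintype ι] {t : ι → F}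
    (ht : Function.Injective t) {n : ℕ} (hn : n < Fintype.card ι) {p q : F[X]}
    (hp : p.degree ≤ n) (hq : q.degree ≤ n) (h : ∀ i, p.eval (t i) = q.eval (t i)) : p = q := by
  have hlt : ∀ f : F[X], f.degree ≤ n → f.degree < (Finset.univ : Finset ι).card := fun f hf =>
    hf.trans_lt (by exact_mod_cast hn)
  exact eq_of_degrees_lt_of_eval_index_eq _ ht.injOn (hlt p hp) (hlt q hq)
    fun i _ => h i

theorem affine_eq_of_linearIndependent {ι κ : Type*} [Fintype ι] [Fintype κ]
    (hcard : Fintype.card ι = Fintype.card κ + 1) {x : ι → κ → F}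
    (hx : LinearIndependent F fun i => ((1 : F), x i)) {α α' : F} {β β' : κ → F}
    (h : ∀ i, α + ∑ ℓ, β ℓ * x i ℓ = α' + ∑ ℓ, β' ℓ * x i ℓ) : α = α' ∧ β = β' := by
  classical
  have hspan : Submodule.span F (Set.range fun i => ((1 : F), x i)) = ⊤ :=
    hx.span_eq_top_of_card_eq_finrank' (by simp [hcard, add_comm])
  let L : F × (κ → F) →ₗ[F] F :=
    LinearMap.coprod ((α - α') • LinearMap.id) (dotProductEquiv F κ (β - β'))
  have hL : ∀ c y, L (c, y) = (α - α') * c + (β - β') ⬝ᵥ y := fun c y => by simp [L]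
  have hL0 : L = 0 := LinearMap.ext_on_range hspan fun i => by
    rw [hL, mul_one, sub_dotProduct, LinearMap.zero_apply]
    simp only [dotProduct]
    linear_combination h i
  refine ⟨sub_eq_zero.mp ?_, funext fun ℓ => sub_eq_zero.mp ?_⟩
  · simpa [hL] using LinearMap.congr_fun hL0 (1, 0)
  · simpa [hL] using LinearMap.congr_fun hL0 (0, Pi.single ℓ 1)

section BaselineEval

variable {ι J κ : Type*} [Fintype κ]

/-- The evaluation map `σ ↦ (σ(x_{i,j}; tᵢ))` of the baseline code; `V[M,N]` is the domain for
`m = M + 1`, `n = N + 1`. -/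
def baselineEval (t : ι → F) (x : ι → J → κ → F) (m n : ℕ) :
    degreeLT F m × (κ → degreeLT F n) →ₗ[F] ι × J → F where
  toFun a p := (a.1 : F[X]).eval (t p.1) + ∑ ℓ, (a.2 ℓ : F[X]).eval (t p.1) * x p.1 p.2 ℓ
  map_add' a a' := by
    funext p
    simp only [Prod.fst_add, Prod.snd_add, Pi.add_apply, Submodule.coe_add, eval_add, add_mul,
      Finset.sum_add_distrib]
    ring
  map_smul' c a := by
    funext p
    simp only [Prod.smul_fst, Prod.smul_snd, Pi.smul_apply, SetLike.val_smul, eval_smul,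
      smul_eq_mul, RingHom.id_apply, mul_add, Finset.mul_sum, mul_assoc]

theorem range_baselineEval (t : ι → F) (x : ι → J → κ → F) (M N : ℕ) :
    Set.range (baselineEval t x (M + 1) (N + 1)) =
      {w | ∃ (a₀ : F[X]) (a : κ → F[X]), a₀.degree ≤ M ∧ (∀ ℓ, (a ℓ).degree ≤ N) ∧
        w = fun p => a₀.eval (t p.1) + ∑ ℓ, (a ℓ).eval (t p.1) * x p.1 p.2 ℓ} := by
  ext w
  constructor
  · rintro ⟨a, rfl⟩
    exact ⟨a.1, fun ℓ => a.2 ℓ, mem_degreeLT_succ_iff.mp a.1.2,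
      fun ℓ => mem_degreeLT_succ_iff.mp (a.2 ℓ).2, rfl⟩
  · rintro ⟨a₀, a, h₀, ha, rfl⟩
    exact ⟨(⟨a₀, mem_degreeLT_succ_iff.mpr h₀⟩, fun ℓ => ⟨a ℓ, mem_degreeLT_succ_iff.mpr (ha ℓ)⟩),
      rfl⟩

end BaselineEval

theorem finrank_degreeLT_prod_pi (κ : Type*) [Fintype κ] (m n : ℕ) :
    Module.finrank F (degreeLT F m × (κ → degreeLT F n)) = m + Fintype.card κ * n := by
  simp [Module.finrank_prod, Module.finrank_pi_fintype, (degreeLTEquiv F _).finrank_eq]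

theorem stmt_2_general (F : Type) [Field F]
    (r b M N : ℕ) (hr : 2 ≤ r)
    (hM : M + 1 ≤ b) (hN : N + 1 ≤ b)
    (t : Fin b → F) (ht : Function.Injective t)
    (P : Fin b → Fin (r + 1) → (Fin (r - 1) → F))
    -- no r of the r+1 points in each fiber lie on an affine hyperplane
    (hP : ∀ (i : Fin b) (j : Fin (r + 1)), LinearIndependent F
      (fun j' : {j' : Fin (r + 1) // j' ≠ j} =>
        (((1 : F), P i j') : F × (Fin (r - 1) → F)))) :
    -- injectivity of the evaluation map on V[M,N]
    (∀ (a₀ a₀' : Polynomial F) (a a' : Fin (r - 1) → Polynomial F),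
      a₀.degree ≤ (M : ℕ) → a₀'.degree ≤ (M : ℕ) →
      (∀ ℓ, (a ℓ).degree ≤ (N : ℕ)) → (∀ ℓ, (a' ℓ).degree ≤ (N : ℕ)) →
      (∀ (i : Fin b) (j : Fin (r + 1)),
        a₀.eval (t i) + ∑ ℓ : Fin (r - 1), (a ℓ).eval (t i) * P i j ℓ
          = a₀'.eval (t i) + ∑ ℓ : Fin (r - 1), (a' ℓ).eval (t i) * P i j ℓ) →
      a₀ = a₀' ∧ a = a') ∧
    -- dimension of the baseline code
    Module.finrank F (Submodule.span F
      {w : Fin b × Fin (r + 1) → F |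
        ∃ (a₀ : Polynomial F) (a : Fin (r - 1) → Polynomial F),
          a₀.degree ≤ (M : ℕ) ∧ (∀ ℓ, (a ℓ).degree ≤ (N : ℕ)) ∧
          w = fun p => a₀.eval (t p.1)
            + ∑ ℓ : Fin (r - 1), (a ℓ).eval (t p.1) * P p.1 p.2 ℓ})
      = (M + 1) + (r - 1) * (N + 1) := by
  have hcard : Fintype.card {j : Fin (r + 1) // j ≠ 0} = Fintype.card (Fin (r - 1)) + 1 := by
    simp [Fintype.card_subtype_compl]; omega
  have hinj : ∀ (a₀ a₀' : F[X]) (a a' : Fin (r - 1) → F[X]),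
      a₀.degree ≤ M → a₀'.degree ≤ M → (∀ ℓ, (a ℓ).degree ≤ N) → (∀ ℓ, (a' ℓ).degree ≤ N) →
      (∀ i j, a₀.eval (t i) + ∑ ℓ, (a ℓ).eval (t i) * P i j ℓ
          = a₀'.eval (t i) + ∑ ℓ, (a' ℓ).eval (t i) * P i j ℓ) →
      a₀ = a₀' ∧ a = a' := by
    intro a₀ a₀' a a' h₀ h₀' ha ha' heq
    have hfiber i := affine_eq_of_linearIndependent hcard (hP i 0) fun j => heq i j
    have hlt : ∀ n, n + 1 ≤ b → n < Fintype.card (Fin b) := fun n hn => by simp; omega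
    exact ⟨eq_of_degree_le_of_forall_eval_eq ht (hlt M hM) h₀ h₀' fun i => (hfiber i).1,
      funext fun ℓ => eq_of_degree_le_of_forall_eval_eq ht (hlt N hN) (ha ℓ) (ha' ℓ)
        fun i => congrFun (hfiber i).2 ℓ⟩
  have hev : Function.Injective (baselineEval t P (M + 1) (N + 1)) := fun u v huv => by
    obtain ⟨h₀, h⟩ := hinj u.1 v.1 (fun ℓ => u.2 ℓ) (fun ℓ => v.2 ℓ)
      (mem_degreeLT_succ_iff.mp u.1.2) (mem_degreeLT_succ_iff.mp v.1.2)
      (fun ℓ => mem_degreeLT_succ_iff.mp (u.2 ℓ).2) (fun ℓ => mem_degreeLT_succ_iff.mp (v.2 ℓ).2)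
      fun i j => congrFun huv (i, j)
    exact Prod.ext (Subtype.ext h₀) (funext fun ℓ => Subtype.ext (congrFun h ℓ))
  refine ⟨hinj, ?_⟩
  rw [← range_baselineEval, ← LinearMap.coe_range, Submodule.span_eq,
    LinearMap.finrank_range_of_inj hev, finrank_degreeLT_prod_pi, Fintype.card_fin]

/-- for a baseline configuration with `b - M ≥ 1` and `b - N ≥ 1`, the
evaluation map on `V[M,N]` is injective, and hence the baseline code has dimension
`(M+1) + (r-1)(N+1)`. -/
theorem stmt_2 (F : Type) [Field F] [Fintype F] [DecidableEq F]
    (r b M N : ℕ) (hr : 2 ≤ r) (hb : 1 ≤ b)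
    (hM : M + 1 ≤ b) (hN : N + 1 ≤ b)
    (t : Fin b → F) (ht : Function.Injective t)
    (P : Fin b → Fin (r + 1) → (Fin (r - 1) → F))
    -- no r of the r+1 points in each fiber lie on an affine hyperplane
    (hP : ∀ (i : Fin b) (j : Fin (r + 1)), LinearIndependent F
      (fun j' : {j' : Fin (r + 1) // j' ≠ j} =>
        (((1 : F), P i j') : F × (Fin (r - 1) → F)))) :
    -- injectivity of the evaluation map on V[M,N]
    (∀ (a₀ a₀' : Polynomial F) (a a' : Fin (r - 1) → Polynomial F),
      a₀.degree ≤ (M : ℕ) → a₀'.degree ≤ (M : ℕ) →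
      (∀ ℓ, (a ℓ).degree ≤ (N : ℕ)) → (∀ ℓ, (a' ℓ).degree ≤ (N : ℕ)) →
      (∀ (i : Fin b) (j : Fin (r + 1)),
        a₀.eval (t i) + ∑ ℓ : Fin (r - 1), (a ℓ).eval (t i) * P i j ℓ
          = a₀'.eval (t i) + ∑ ℓ : Fin (r - 1), (a' ℓ).eval (t i) * P i j ℓ) →
      a₀ = a₀' ∧ a = a') ∧
    -- dimension of the baseline code
    Module.finrank F (Submodule.span F
      {w : Fin b × Fin (r + 1) → F |
        ∃ (a₀ : Polynomial F) (a : Fin (r - 1) → Polynomial F),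
          a₀.degree ≤ (M : ℕ) ∧ (∀ ℓ, (a ℓ).degree ≤ (N : ℕ)) ∧
          w = fun p => a₀.eval (t p.1)
            + ∑ ℓ : Fin (r - 1), (a ℓ).eval (t p.1) * P p.1 p.2 ℓ})
      = (M + 1) + (r - 1) * (N + 1) :=
  stmt_2_general F r b M N hr hM hN t ht P hP
end

section
/- Fix a baseline configuration with b − M ≥ 1 and b − N ≥ 1, and suppose (b−M)(r+1) ≤ 2(b−N). Then the minimum distance of the baseline code is exactly (b−M)(r+1): every nonzero codeword has Hamming weight at least (b−M)(r+1), and the function σ(x;t) = ∏_{i=1}^{M} (t − t_i) ∈ V[M,N] produces a codeword of Hamming weight exactly (b−M)(r+1). -/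
/-!
Let `σ = a₀ + Σ aℓ xℓ` give a nonzero codeword. If some `aℓ ≠ 0`, then `aℓ(tᵢ) ≠ 0` for at least
`b - N` of the `tᵢ`, and on each such fiber `σ(·; tᵢ)` is a nonzero affine function; it cannot
vanish at `r` of the `r + 1` points, because those span, so the fiber has weight at least `2`.
This gives weight `≥ 2(b - N) ≥ (b - M)(r + 1)`. Otherwise `σ = a₀(t)` with `a₀ ≠ 0`, which is
nonzero at `≥ b - M` of the `tᵢ`, each contributing a full fiber of `r + 1` nonzero entries.
The product `∏ᵢ₌₁ᴹ (t - tᵢ)` vanishes on exactly `M` fibers, so the bound is attained.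
-/

open Polynomial Finset

section Hamming

variable {α β R : Type*} [Fintype α] [Fintype β] [Zero R] [DecidableEq R]

theorem hammingNorm_eq_sum_hammingNorm_fiber (w : α × β → R) :
    hammingNorm w = ∑ i, hammingNorm fun j => w (i, j) := by
  simp only [hammingNorm, card_filter]
  rw [← univ_product_univ, sum_product]

theorem card_mul_le_hammingNorm {w : α × β → R} (S : Finset α) {k : ℕ}
    (h : ∀ i ∈ S, k ≤ hammingNorm fun j => w (i, j)) : #S * k ≤ hammingNorm w := by
  rw [hammingNorm_eq_sum_hammingNorm_fiber, ← smul_eq_mul]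
  exact (card_nsmul_le_sum S _ k h).trans (sum_le_sum_of_subset (subset_univ S))

theorem hammingNorm_comp_fst (g : α → R) :
    hammingNorm (fun p : α × β => g p.1) = hammingNorm g * Fintype.card β := by
  rw [hammingNorm, hammingNorm, ← univ_product_univ, filter_product_left (g · ≠ 0), card_product,
    card_univ]

end Hamming

theorem two_le_hammingNorm_of_forall_span_eq_top {R E M ι : Type*} [Semiring R]
    [AddCommMonoid E] [Module R E] [AddCommMonoid M] [Module R M] [DecidableEq M]
    [Fintype ι] [Nonempty ι] {v : ι → E}
    (hv : ∀ j, Submodule.span R (Set.range fun j' : {k // k ≠ j} => v j'.1) = ⊤)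
    {φ : E →ₗ[R] M} (hφ : φ ≠ 0) : 2 ≤ hammingNorm fun j => φ (v j) := by
  by_contra! h
  obtain ⟨j₀, hj₀⟩ := card_le_one_iff_subset_singleton.mp (Nat.le_of_lt_succ h)
  refine hφ (LinearMap.ext_on_range (hv j₀) fun j => ?_)
  by_contra hne
  exact j.2 (mem_singleton.mp (hj₀ (by simpa using hne)))

theorem card_sub_le_hammingNorm_eval {ι R : Type*} [Fintype ι] [CommRing R] [IsDomain R]
    [DecidableEq R] {t : ι → R} (ht : Function.Injective t) {p : R[X]} (hp : p ≠ 0) {d : ℕ}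
    (hd : p.degree ≤ d) : Fintype.card ι - d ≤ hammingNorm fun i => p.eval (t i) := by
  have hroots : #{i | p.eval (t i) = 0} ≤ d :=
    calc #{i | p.eval (t i) = 0}
        ≤ #p.roots.toFinset :=
          card_le_card_of_injOn t (fun i hi => by simp_all [mem_roots hp]) ht.injOn
      _ ≤ Multiset.card p.roots := p.roots.toFinset_card_le
      _ ≤ p.natDegree := p.card_roots'
      _ ≤ d := natDegree_le_iff_degree_le.mpr hd
  have := card_filter_add_card_filter_not (s := univ) fun i => p.eval (t i) = 0
  simp only [card_univ] at this
  change _ ≤ #{i | ¬p.eval (t i) = 0}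
  omega

theorem hammingNorm_eval_prod_X_sub_C {ι κ R : Type*} [Fintype ι] [Fintype κ] [CommRing R]
    [IsDomain R] [DecidableEq R] {t : ι → R} (ht : Function.Injective t) {e : κ → ι}
    (he : Function.Injective e) :
    hammingNorm (fun i => (∏ j, (X - C (t (e j)))).eval (t i))
      = Fintype.card ι - Fintype.card κ := by
  classical
  have hzeros : ({i | (∏ j, (X - C (t (e j)))).eval (t i) ≠ 0} : Finset ι) = (univ.image e)ᶜ := by
    ext i
    simp [eval_prod, prod_eq_zero_iff, sub_eq_zero, ht.eq_iff, eq_comm (a := i)]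
  rw [hammingNorm, hzeros, card_compl, card_image_of_injective _ he, card_univ]

/-- No `r` of the `r + 1` points `Q j ∈ F^(r-1)` lie on an affine hyperplane. -/
def GeneralPosition {F : Type*} [Field F] {r : ℕ} (Q : Fin (r + 1) → Fin (r - 1) → F) : Prop :=
  ∀ j, LinearIndependent F
    (fun j' : {j' : Fin (r + 1) // j' ≠ j} => ((1 : F), Q j') : _ → F × (Fin (r - 1) → F))

theorem GeneralPosition.two_le_hammingNorm_affine {F : Type*} [Field F] [DecidableEq F] {r : ℕ}
    (hr : 1 ≤ r) {Q : Fin (r + 1) → Fin (r - 1) → F} (hQ : GeneralPosition Q)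
    (c₀ : F) {c : Fin (r - 1) → F} (hc : c ≠ 0) :
    2 ≤ hammingNorm fun j => c₀ + ∑ ℓ, c ℓ * Q j ℓ := by
  obtain ⟨ℓ₀, hℓ₀⟩ := Function.ne_iff.mp hc
  let φ : F × (Fin (r - 1) → F) →ₗ[F] F :=
    (LinearMap.lsmul F F c₀).coprod (dotProductEquiv F (Fin (r - 1)) c)
  have hφ : φ ≠ 0 := fun h => hℓ₀ <| by
    simpa [φ, dotProduct, Pi.single_apply] using LinearMap.congr_fun h (0, Pi.single ℓ₀ 1)
  have hspan (j : Fin (r + 1)) := (hQ j).span_eq_top_of_card_eq_finrank' (by simp; omega)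
  have hφQ : (fun j => φ ((1 : F), Q j)) = fun j => c₀ + ∑ ℓ, c ℓ * Q j ℓ := by
    ext j
    simp [φ, dotProduct]
  rw [← hφQ]
  exact two_le_hammingNorm_of_forall_span_eq_top (v := fun j => ((1 : F), Q j)) hspan hφ

section Baseline

variable {F ι J κ : Type*} [Field F] [Fintype ι] [Fintype J] [Fintype κ]

def baselineWord (t : ι → F) (P : ι → J → κ → F) (a₀ : F[X]) (a : κ → F[X]) : ι × J → F :=
  fun p => a₀.eval (t p.1) + ∑ ℓ, (a ℓ).eval (t p.1) * P p.1 p.2 ℓ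

def baselineCode (t : ι → F) (P : ι → J → κ → F) (M N : ℕ) : Submodule F (ι × J → F) where
  carrier := {w | ∃ (a₀ : F[X]) (a : κ → F[X]), a₀.degree ≤ M ∧ (∀ ℓ, (a ℓ).degree ≤ N) ∧
    w = baselineWord t P a₀ a}
  zero_mem' := ⟨0, 0, by simp, by simp, by ext; simp [baselineWord]⟩
  add_mem' := by
    rintro _ _ ⟨a₀, a, ha₀, ha, rfl⟩ ⟨b₀, b, hb₀, hb, rfl⟩
    refine ⟨a₀ + b₀, a + b, (degree_add_le _ _).trans (max_le ha₀ hb₀),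
      fun ℓ => (degree_add_le _ _).trans (max_le (ha ℓ) (hb ℓ)), ?_⟩
    ext
    simp only [baselineWord, Pi.add_apply, eval_add, add_mul, sum_add_distrib]
    ring
  smul_mem' := by
    rintro c _ ⟨a₀, a, ha₀, ha, rfl⟩
    refine ⟨c • a₀, c • a, (degree_smul_le _ _).trans ha₀,
      fun ℓ => (degree_smul_le _ _).trans (ha ℓ), ?_⟩
    ext
    simp only [baselineWord, Pi.smul_apply, eval_smul, smul_eq_mul, mul_add, mul_sum, mul_assoc]

variable [DecidableEq F] {t : ι → F}

theorem card_sub_mul_le_hammingNorm_baselineWord (ht : Function.Injective t)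
    (P : ι → J → κ → F) {M : ℕ} {a₀ : F[X]} (ha₀ : a₀.degree ≤ M) (h₀ : a₀ ≠ 0) :
    (Fintype.card ι - M) * Fintype.card J ≤ hammingNorm (baselineWord t P a₀ 0) := by
  have : baselineWord t P a₀ 0 = fun p => a₀.eval (t p.1) := by ext; simp [baselineWord]
  rw [this, hammingNorm_comp_fst (β := J) fun i => a₀.eval (t i)]
  gcongr
  exact card_sub_le_hammingNorm_eval ht h₀ ha₀

theorem two_mul_card_sub_le_hammingNorm_baselineWord {r : ℕ} (hr : 1 ≤ r)
    (ht : Function.Injective t) {P : ι → Fin (r + 1) → Fin (r - 1) → F}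
    (hP : ∀ i, GeneralPosition (P i))
    (a₀ : F[X]) {N : ℕ} {a : Fin (r - 1) → F[X]} (ha : ∀ ℓ, (a ℓ).degree ≤ N) (h₀ : a ≠ 0) :
    2 * (Fintype.card ι - N) ≤ hammingNorm (baselineWord t P a₀ a) := by
  obtain ⟨ℓ₀, hℓ₀⟩ := Function.ne_iff.mp h₀
  calc 2 * (Fintype.card ι - N) ≤ #{i | (a ℓ₀).eval (t i) ≠ 0} * 2 := by
        rw [mul_comm]
        gcongr
        exact card_sub_le_hammingNorm_eval ht hℓ₀ (ha ℓ₀)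
    _ ≤ hammingNorm (baselineWord t P a₀ a) :=
        card_mul_le_hammingNorm _ fun i hi =>
          (hP i).two_le_hammingNorm_affine hr (a₀.eval (t i)) (c := fun ℓ => (a ℓ).eval (t i))
            fun h => (mem_filter.mp hi).2 (congrFun h ℓ₀)

theorem le_hammingNorm_of_mem_baselineCode {r M N : ℕ} (hr : 1 ≤ r)
    (ht : Function.Injective t) {P : ι → Fin (r + 1) → Fin (r - 1) → F}
    (hP : ∀ i, GeneralPosition (P i))
    (hmin : (Fintype.card ι - M) * (r + 1) ≤ 2 * (Fintype.card ι - N))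
    {w : ι × Fin (r + 1) → F} (hw : w ∈ baselineCode t P M N) (hw₀ : w ≠ 0) :
    (Fintype.card ι - M) * (r + 1) ≤ hammingNorm w := by
  obtain ⟨a₀, a, ha₀, ha, rfl⟩ := hw
  by_cases h₀ : a = 0
  · subst h₀
    have : a₀ ≠ 0 := by rintro rfl; exact hw₀ (by ext; simp [baselineWord])
    simpa using card_sub_mul_le_hammingNorm_baselineWord ht P ha₀ this
  · exact hmin.trans (two_mul_card_sub_le_hammingNorm_baselineWord hr ht hP a₀ ha h₀)

end Baseline

/-- for a baseline configuration with `b - M ≥ 1`, `b - N ≥ 1` and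
`(b-M)(r+1) ≤ 2(b-N)`, the minimum distance of the baseline code is exactly
`(b-M)(r+1)`: every nonzero codeword has weight at least `(b-M)(r+1)`, and the
function `σ(x;t) = ∏_{i=1}^{M} (t - t_i) ∈ V[M,N]` produces a codeword of the code of
Hamming weight exactly `(b-M)(r+1)`. -/
theorem stmt_4 (F : Type) [Field F] [DecidableEq F]
    (r b M N : ℕ) (hr : 2 ≤ r)
    (hM : M + 1 ≤ b)
    (hmin : (b - M) * (r + 1) ≤ 2 * (b - N))
    (t : Fin b → F) (ht : Function.Injective t)
    (P : Fin b → Fin (r + 1) → (Fin (r - 1) → F))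
    -- no r of the r+1 points in each fiber lie on an affine hyperplane
    (hP : ∀ (i : Fin b) (j : Fin (r + 1)), LinearIndependent F
      (fun j' : {j' : Fin (r + 1) // j' ≠ j} =>
        (((1 : F), P i j') : F × (Fin (r - 1) → F)))) :
    -- every nonzero codeword has Hamming weight at least (b-M)(r+1)
    (∀ w ∈ Submodule.span F
      {w : Fin b × Fin (r + 1) → F |
        ∃ (a₀ : Polynomial F) (a : Fin (r - 1) → Polynomial F),
          a₀.degree ≤ (M : ℕ) ∧ (∀ ℓ, (a ℓ).degree ≤ (N : ℕ)) ∧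
          w = fun p => a₀.eval (t p.1)
            + ∑ ℓ : Fin (r - 1), (a ℓ).eval (t p.1) * P p.1 p.2 ℓ},
      w ≠ 0 → (b - M) * (r + 1) ≤ hammingNorm w) ∧
    -- the codeword of σ(x;t) = ∏_{i=1}^{M} (t - t_i) belongs to the code and has
    -- weight exactly (b-M)(r+1)
    ((fun p : Fin b × Fin (r + 1) =>
        (∏ i : Fin M, (Polynomial.X - Polynomial.C (t (Fin.castLE (by omega) i)))).eval
          (t p.1))
      ∈ Submodule.span F
        {w : Fin b × Fin (r + 1) → F |
          ∃ (a₀ : Polynomial F) (a : Fin (r - 1) → Polynomial F),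
            a₀.degree ≤ (M : ℕ) ∧ (∀ ℓ, (a ℓ).degree ≤ (N : ℕ)) ∧
            w = fun p => a₀.eval (t p.1)
              + ∑ ℓ : Fin (r - 1), (a ℓ).eval (t p.1) * P p.1 p.2 ℓ}) ∧
    hammingNorm (fun p : Fin b × Fin (r + 1) =>
        (∏ i : Fin M, (Polynomial.X - Polynomial.C (t (Fin.castLE (by omega) i)))).eval
          (t p.1))
      = (b - M) * (r + 1) := by
  have hMb : M ≤ b := by omega
  refine ⟨fun w hw hw₀ => ?_, Submodule.subset_span
    ⟨∏ i : Fin M, (X - C (t (Fin.castLE hMb i))), 0, ?_, by simp, by ext; simp⟩, ?_⟩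
  · have hw' := (Submodule.span_eq (baselineCode t P M N)).le hw
    simpa using le_hammingNorm_of_mem_baselineCode (by omega) ht hP (by simpa using hmin) hw' hw₀
  · exact degree_le_of_natDegree_le (by simp)
  · rw [hammingNorm_comp_fst (β := Fin (r + 1)) fun i => eval (t i) _,
      hammingNorm_eval_prod_X_sub_C ht (Fin.castLE_injective hMb)]
    simp
end

section
/- Let r, b, M, N be integers with r ≥ 3, b ≥ 1, 0 ≤ M ≤ b−1 and 0 ≤ N ≤ b−1. If min{(b−M)(r+1), 2(b−N)} = (r+1)(b−(N+1)) − (M−N) − ⌈(M−N)/r⌉ + 2, then either (r = 3, M = b−1 and N = b−2), or (M = N = b−1). In other words, the only cases in which the lower bound min{(b−M)(r+1), 2(b−N)} for the distance of a baseline code coincides with the Singleton-type upper bound (r+1)(b−(N+1)) − (M−N) − ⌈(M−N)/r⌉ + 2 are r = 3, M = b−1, N = b−2 (where the common value is 4) and M = N = b−1 (where the common value is 2). -/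
/-! Write `a = b - 1 - M` and `c = b - 1 - N`, both nonnegative, and `t` for the ceiling term.
The only information about `t` that is needed is `t r < (c - a) + r`. Whichever term realizes
the minimum, the hypothesis makes `t` an explicit polynomial in `r, a, c`, and this inequality
then reads `r² (c - a - 1) < c - a` or `(r² - 2r - 1) c + (r + 1) a < r`. Since `r ≥ 3`, these
leave only `a = 0, c = 1, r = 3` and `a = c = 0`. -/

theorem Int.ceil_intCast_div_mul_lt {K : Type*} [Field K] [LinearOrder K] [IsStrictOrderedRing K]
    [FloorRing K] (m : ℤ) {r : ℤ} (hr : 0 < r) :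
    ⌈(m : K) / r⌉ * r < m + r := by
  have hrK : (0 : K) < r := by exact_mod_cast hr
  have hlt : ((⌈(m : K) / r⌉ - 1 : ℤ) : K) < m / r := by
    push_cast
    linarith [Int.ceil_lt_add_one ((m : K) / r)]
  have : (⌈(m : K) / r⌉ - 1) * r < m := by
    exact_mod_cast (lt_div_iff₀ hrK).1 hlt
  linarith

theorem cases_of_locality_term_eq_singleton_bound {r a c t : ℤ} (hr : 3 ≤ r) (ha : 0 ≤ a)
    (ht : t * r < c - a + r) (hle : (a + 1) * (r + 1) ≤ 2 * (c + 1))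
    (h : (a + 1) * (r + 1) = r * c + a - t + 2) :
    r = 3 ∧ a = 0 ∧ c = 1 := by
  have ht_eq : t = r * (c - a - 1) + 1 := by linarith
  have hsq : r * r * (c - a - 1) < c - a := by rw [ht_eq] at ht; linarith
  have hca : c ≤ a + 1 := by
    by_contra! hgt
    nlinarith [mul_le_mul_of_nonneg_right (show 9 ≤ r * r by nlinarith)
      (show 0 ≤ c - a - 1 by linarith)]
  have ha0 : a = 0 := by nlinarith
  subst ha0
  have hc1 : c = 1 := by linarith
  subst hc1
  exact ⟨by linarith, rfl, rfl⟩

theorem cases_of_two_mul_eq_singleton_bound {r a c t : ℤ} (hr : 3 ≤ r) (ha : 0 ≤ a)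
    (hc : 0 ≤ c) (ht : t * r < c - a + r) (h : 2 * (c + 1) = r * c + a - t + 2) :
    (r = 3 ∧ a = 0 ∧ c = 1) ∨ (a = 0 ∧ c = 0) := by
  have ht_eq : t = (r - 2) * c + a := by linarith
  have hlin : (r * r - 2 * r - 1) * c + (r + 1) * a < r := by rw [ht_eq] at ht; linarith
  have hc1 : c ≤ 1 := by
    by_contra! hgt
    nlinarith [mul_le_mul_of_nonneg_left (show 2 ≤ c by linarith)
      (show 0 ≤ r * r - 2 * r - 1 by nlinarith), mul_nonneg (show 0 ≤ r + 1 by linarith) ha]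
  interval_cases c
  · right
    exact ⟨by nlinarith, rfl⟩
  · left
    have hr3 : r = 3 := by nlinarith [mul_nonneg (show 0 ≤ r + 1 by linarith) ha]
    subst hr3
    exact ⟨rfl, by linarith, rfl⟩

theorem stmt_5_general (r b M N : ℤ) (hr : 3 ≤ r)
    (hM : M ≤ b - 1) (hN : N ≤ b - 1)
    (h : min ((b - M) * (r + 1)) (2 * (b - N))
        = (r + 1) * (b - (N + 1)) - (M - N) - ⌈((M : ℚ) - (N : ℚ)) / (r : ℚ)⌉ + 2) :
    (r = 3 ∧ M = b - 1 ∧ N = b - 2) ∨ (M = b - 1 ∧ N = b - 1) := by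
  have ht := Int.ceil_intCast_div_mul_lt (K := ℚ) (M - N) (show 0 < r by linarith)
  push_cast at ht
  set t := ⌈((M : ℚ) - N) / r⌉
  have ha : 0 ≤ b - 1 - M := by linarith
  have hc : 0 ≤ b - 1 - N := by linarith
  rcases le_total ((b - M) * (r + 1)) (2 * (b - N)) with hle | hle
  · rw [min_eq_left hle] at h
    have := cases_of_locality_term_eq_singleton_bound (c := b - 1 - N) (t := t) hr ha
      (by linarith) (by linarith) (by linarith)
    omega
  · rw [min_eq_right hle] at h
    have := cases_of_two_mul_eq_singleton_bound (c := b - 1 - N) (t := t) hr ha hc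
      (by linarith) (by linarith)
    omega

/-- the only cases where the lower bound `min ((b-M)(r+1)) (2(b-N))` for
the distance of a baseline code meets the Singleton-type upper bound
`(r+1)(b-(N+1)) - (M-N) - ⌈(M-N)/r⌉ + 2` are `r = 3, M = b-1, N = b-2` and
`M = N = b-1`. -/
theorem stmt_5 (r b M N : ℤ) (hr : 3 ≤ r) (hb : 1 ≤ b)
    (hM0 : 0 ≤ M) (hM : M ≤ b - 1) (hN0 : 0 ≤ N) (hN : N ≤ b - 1)
    (h : min ((b - M) * (r + 1)) (2 * (b - N))
        = (r + 1) * (b - (N + 1)) - (M - N) - ⌈((M : ℚ) - (N : ℚ)) / (r : ℚ)⌉ + 2) :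
    (r = 3 ∧ M = b - 1 ∧ N = b - 2) ∨ (M = b - 1 ∧ N = b - 1) :=
  stmt_5_general r b M N hr hM hN h
end

section
/- Let F_q be a finite field and b ≥ 2 an integer. Fix a baseline configuration with r = 3, M = b−1 and N = b−2 (so the P_{i,j} are four points of F_q² in each of b fibers, no three of which are collinear). Then the baseline code C has length n = 4b, dimension k = 3b−2, minimum distance d = 4, and is locally recoverable with locality 3 (for each point P_{i,j}, the value σ(P_{i,j}; t_i) of any σ ∈ V[M,N] is determined by the values of σ at the other three points of the same fiber). Moreover d = n − k − ⌈k/3⌉ + 2, i.e., C is an optimal locally recoverable code. -/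
/-!
Over a fibre `t = tᵢ` a codeword is the affine function `a₀(tᵢ) + a₁(tᵢ) x₁ + a₂(tᵢ) x₂`
evaluated at four points, no three collinear. An affine function vanishing at three such
points is zero, which gives locality, and, since polynomials of degree `< b` are determined by
their values at the `b` distinct `tᵢ`, injectivity of `V[b-1, b-2] → F^{4b}`, so
`k = b + 2(b - 1)`. A nonzero codeword with `a₁ = a₂ = 0` is nonzero on a whole fibre. Otherwise
some `aℓ ≠ 0` has degree `≤ b - 2`, hence is nonzero at two of the `tᵢ`, and on each of those
fibres the affine function is nonconstant and vanishes on a line, so at no more than two of the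
four points: the weight is at least `2 · 2`. A Lagrange basis polynomial as `a₀` gives a codeword
supported on a single fibre, of weight exactly `4`.
-/

open Polynomial Finset Matrix

variable {F : Type*} [Field F]

theorem eq_zero_of_forall_add_dotProduct_eq_zero {ι : Type*} [Fintype ι] {m : ℕ}
    {Q : ι → Fin m → F} (hQ : LinearIndependent F fun i => ((1 : F), Q i))
    (hcard : Fintype.card ι = m + 1) {c₀ : F} {c : Fin m → F}
    (h : ∀ i, c₀ + c ⬝ᵥ Q i = 0) : c₀ = 0 ∧ c = 0 := by
  let φ : F × (Fin m → F) →ₗ[F] F :=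
    (LinearMap.fst F F _).smulRight c₀ + (dotProductBilin F F c).comp (LinearMap.snd F F _)
  have hφ : φ = 0 := by
    refine LinearMap.ext_on (hQ.span_eq_top_of_card_eq_finrank' (by simp [hcard, add_comm])) ?_
    rintro _ ⟨i, rfl⟩
    simpa [φ] using h i
  refine ⟨by simpa [φ] using LinearMap.congr_fun hφ (1, 0), funext fun ℓ => ?_⟩
  simpa [φ] using LinearMap.congr_fun hφ (0, Pi.single ℓ 1)

section GeneralPosition

variable {κ : Type*} [Fintype κ] {m : ℕ}

/-- Any `card κ - 1` of the points `Q j` are affinely independent, i.e. not on a hyperplane. -/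
def InGeneralPosition (Q : κ → Fin m → F) : Prop :=
  ∀ j, LinearIndependent F fun j' : {j' // j' ≠ j} => ((1 : F), Q j'.1)

variable {Q : κ → Fin m → F}

theorem InGeneralPosition.eq_zero_of_forall_ne (hQ : InGeneralPosition Q)
    (hκ : Fintype.card κ = m + 2) {c₀ : F} {c : Fin m → F} (j : κ)
    (h : ∀ j' ≠ j, c₀ + c ⬝ᵥ Q j' = 0) : c₀ = 0 ∧ c = 0 := by
  classical
  exact eq_zero_of_forall_add_dotProduct_eq_zero (hQ j) (by simp [hκ]) fun j' => h j' j'.2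

theorem InGeneralPosition.add_dotProduct_eq_of_forall_ne (hQ : InGeneralPosition Q)
    (hκ : Fintype.card κ = m + 2) {c₀ d₀ : F} {c d : Fin m → F} {j : κ}
    (h : ∀ j' ≠ j, c₀ + c ⬝ᵥ Q j' = d₀ + d ⬝ᵥ Q j') : c₀ + c ⬝ᵥ Q j = d₀ + d ⬝ᵥ Q j := by
  obtain ⟨h₀, h₁⟩ := hQ.eq_zero_of_forall_ne hκ (c₀ := c₀ - d₀) (c := c - d) j
    fun j' hj' => by rw [sub_dotProduct, ← sub_eq_zero.mpr (h j' hj')]; ring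
  rw [sub_eq_zero.mp h₀, sub_eq_zero.mp h₁]

theorem InGeneralPosition.two_le_card_add_dotProduct_ne_zero [DecidableEq F]
    (hQ : InGeneralPosition Q) (hκ : Fintype.card κ = m + 2) {c₀ : F} {c : Fin m → F}
    (hc : c ≠ 0) : 2 ≤ #{j | c₀ + c ⬝ᵥ Q j ≠ 0} := by
  have : Nonempty κ := Fintype.card_pos_iff.mp (by omega)
  by_contra! hlt
  obtain ⟨j, hj⟩ := card_le_one_iff_subset_singleton.mp (Nat.le_of_lt_succ hlt)
  refine hc (hQ.eq_zero_of_forall_ne hκ (c₀ := c₀) j fun j' hj' => ?_).2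
  by_contra hne
  exact hj' (mem_singleton.mp (hj (mem_filter.mpr ⟨mem_univ _, hne⟩)))

end GeneralPosition

theorem card_filter_eval_eq_zero_le [DecidableEq F] {ι : Type*} [Fintype ι] {t : ι → F}
    (ht : Function.Injective t) {p : F[X]} (hp : p ≠ 0) :
    #{i | p.eval (t i) = 0} ≤ p.natDegree := by
  rw [← card_image_of_injective _ ht]
  refine card_le_degree_of_subset_roots fun x hx => ?_
  obtain ⟨i, hi, rfl⟩ := mem_image.mp hx
  exact (mem_roots hp).mpr (mem_filter.mp hi).2

theorem eq_zero_of_mem_degreeLE_of_eval_eq_zero {ι : Type*} [Fintype ι] {t : ι → F}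
    (ht : Function.Injective t) {M : ℕ} (hM : M < Fintype.card ι) {p : F[X]}
    (hp : p ∈ degreeLE F M) (h : ∀ i, p.eval (t i) = 0) : p = 0 :=
  eq_zero_of_degree_lt_of_eval_index_eq_zero univ ht.injOn
    ((mem_degreeLE.mp hp).trans_lt (by exact_mod_cast hM)) fun i _ => h i

theorem hammingNorm_prod {ι κ β : Type*} [Fintype ι] [Fintype κ] [Zero β] [DecidableEq β]
    (w : ι × κ → β) : hammingNorm w = ∑ i, hammingNorm fun j => w (i, j) := by
  simp only [hammingNorm, card_filter, Fintype.sum_prod_type]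

instance (n : ℕ) : Module.Finite F (degreeLE F n) := by
  rw [← degreeLT_succ_eq_degreeLE]
  exact .equiv (degreeLTEquiv F (n + 1)).symm

theorem finrank_degreeLE (n : ℕ) : Module.finrank F (degreeLE F n) = n + 1 := by
  rw [← degreeLT_succ_eq_degreeLE]
  exact (degreeLTEquiv F (n + 1)).finrank_eq.trans (Module.finrank_fin_fun F)

section BaselineCode

variable {ι κ : Type*} {m : ℕ}

/-- The evaluation map `σ ↦ (σ(P i j; t i))`, with `σ ∈ V[M,N]` given by its coefficients
`(a₀, a)`. -/
noncomputable def baselineMap (t : ι → F) (P : ι → κ → Fin m → F) (M N : ℕ) :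
    degreeLE F M × (Fin m → degreeLE F N) →ₗ[F] ι × κ → F where
  toFun a p := (a.1 : F[X]).eval (t p.1) + ∑ ℓ, (a.2 ℓ : F[X]).eval (t p.1) * P p.1 p.2 ℓ
  map_add' a a' := by
    ext p
    simp only [Prod.fst_add, Prod.snd_add, Pi.add_apply, Submodule.coe_add, eval_add, add_mul,
      sum_add_distrib]
    ring
  map_smul' c a := by
    ext p
    simp only [Prod.smul_fst, Prod.smul_snd, Pi.smul_apply, Submodule.coe_smul, eval_smul,
      smul_eq_mul, RingHom.id_apply, mul_add, mul_sum, mul_assoc]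

theorem span_eq_range_baselineMap (t : ι → F) (P : ι → κ → Fin m → F) (M N : ℕ) :
    Submodule.span F {w : ι × κ → F | ∃ (a₀ : F[X]) (a : Fin m → F[X]),
      a₀.degree ≤ (M : WithBot ℕ) ∧ (∀ ℓ, (a ℓ).degree ≤ (N : WithBot ℕ)) ∧
      w = fun p => a₀.eval (t p.1) + ∑ ℓ, (a ℓ).eval (t p.1) * P p.1 p.2 ℓ} =
      LinearMap.range (baselineMap t P M N) := by
  rw [← Submodule.span_eq (LinearMap.range _), LinearMap.coe_range]
  congr 1
  ext w
  constructor
  · rintro ⟨a₀, a, ha₀, ha, rfl⟩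
    exact ⟨(⟨a₀, mem_degreeLE.mpr ha₀⟩, fun ℓ => ⟨a ℓ, mem_degreeLE.mpr (ha ℓ)⟩), rfl⟩
  · rintro ⟨a, rfl⟩
    exact ⟨a.1, fun ℓ => a.2 ℓ, mem_degreeLE.mp a.1.2, fun ℓ => mem_degreeLE.mp (a.2 ℓ).2, rfl⟩

variable [Fintype ι] [Fintype κ] {t : ι → F} {P : ι → κ → Fin m → F} {M N : ℕ}

theorem baselineMap_injective (ht : Function.Injective t) (hM : M < Fintype.card ι)
    (hN : N < Fintype.card ι) (hP : ∀ i, InGeneralPosition (P i))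
    (hκ : Fintype.card κ = m + 2) : Function.Injective (baselineMap t P M N) := by
  have : Nonempty κ := Fintype.card_pos_iff.mp (by omega)
  rw [injective_iff_map_eq_zero]
  rintro ⟨a₀, a⟩ h
  have hfiber (i : ι) := (hP i).eq_zero_of_forall_ne hκ (c₀ := a₀.1.eval (t i))
    (c := fun ℓ => (a ℓ).1.eval (t i)) (Classical.arbitrary κ) fun j _ => congr_fun h (i, j)
  ext1
  · exact Subtype.ext (eq_zero_of_mem_degreeLE_of_eval_eq_zero ht hM a₀.2 fun i => (hfiber i).1)
  · funext ℓ
    exact Subtype.ext (eq_zero_of_mem_degreeLE_of_eval_eq_zero ht hN (a ℓ).2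
      fun i => congr_fun (hfiber i).2 ℓ)

theorem finrank_range_baselineMap (ht : Function.Injective t) (hM : M < Fintype.card ι)
    (hN : N < Fintype.card ι) (hP : ∀ i, InGeneralPosition (P i))
    (hκ : Fintype.card κ = m + 2) :
    Module.finrank F (LinearMap.range (baselineMap t P M N)) = M + 1 + m * (N + 1) := by
  rw [LinearMap.finrank_range_of_inj (baselineMap_injective ht hM hN hP hκ),
    Module.finrank_prod, Module.finrank_pi_fintype]
  simp [finrank_degreeLE]

theorem four_le_hammingNorm_baselineMap [DecidableEq F] (ht : Function.Injective t)
    (hN : N + 2 ≤ Fintype.card ι) (hP : ∀ i, InGeneralPosition (P i))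
    (hκ : Fintype.card κ = m + 2) (hm : 2 ≤ m) {a : degreeLE F M × (Fin m → degreeLE F N)}
    (ha : baselineMap t P M N a ≠ 0) : 4 ≤ hammingNorm (baselineMap t P M N a) := by
  rw [hammingNorm_prod]
  by_cases ha₂ : a.2 = 0
  · obtain ⟨⟨i, j⟩, hij⟩ := Function.ne_iff.mp ha
    have hfiber : hammingNorm (fun j => baselineMap t P M N a (i, j)) = m + 2 := by
      simp_all [hammingNorm, baselineMap]
    calc 4 ≤ m + 2 := by omega
      _ = _ := hfiber.symm
      _ ≤ _ := single_le_sum (f := fun i => hammingNorm fun j => baselineMap t P M N a (i, j))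
          (fun _ _ => Nat.zero_le _) (mem_univ i)
  · obtain ⟨ℓ, hℓ⟩ := Function.ne_iff.mp ha₂
    let S : Finset ι := {i | (a.2 ℓ : F[X]).eval (t i) ≠ 0}
    have hS : 2 ≤ #S := by
      have hroots := card_filter_eval_eq_zero_le ht (p := (a.2 ℓ : F[X]))
        fun h => hℓ (Subtype.ext h)
      have hdeg := natDegree_le_iff_degree_le.mpr (mem_degreeLE.mp (a.2 ℓ).2)
      have hsplit := card_filter_add_card_filter_not (s := univ)
        fun i => (a.2 ℓ : F[X]).eval (t i) = 0
      change _ + #S = _ at hsplit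
      rw [card_univ] at hsplit
      omega
    calc 4 ≤ ∑ _i ∈ S, 2 := by simp only [sum_const, smul_eq_mul]; omega
      _ ≤ ∑ i ∈ S, hammingNorm fun j => baselineMap t P M N a (i, j) :=
          sum_le_sum fun i hi => (hP i).two_le_card_add_dotProduct_ne_zero hκ
            (c₀ := (a.1 : F[X]).eval (t i)) (c := fun ℓ => (a.2 ℓ : F[X]).eval (t i))
            fun h => (mem_filter.mp hi).2 (congr_fun h ℓ)
      _ ≤ _ := sum_le_sum_of_subset (subset_univ S)

theorem exists_hammingNorm_baselineMap_eq_card [DecidableEq F] [Nonempty ι]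
    (ht : Function.Injective t) (hM : Fintype.card ι ≤ M + 1) :
    ∃ a, hammingNorm (baselineMap t P M N a) = Fintype.card κ := by
  classical
  let i₀ := Classical.arbitrary ι
  have hL : Lagrange.basis univ t i₀ ∈ degreeLE F M := by
    rw [mem_degreeLE, Lagrange.degree_basis ht.injOn (mem_univ i₀), card_univ]
    exact_mod_cast Nat.sub_le_of_le_add hM
  refine ⟨(⟨_, hL⟩, 0), ?_⟩
  rw [hammingNorm_prod, sum_eq_single i₀]
  · simp [hammingNorm, baselineMap, Lagrange.eval_basis_self ht.injOn (mem_univ i₀)]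
  · intro i _ hi
    simp [hammingNorm, baselineMap, Lagrange.eval_basis_of_ne (Ne.symm hi) (mem_univ i)]
  · simp

end BaselineCode

theorem stmt_6_general (F : Type) [Field F] [DecidableEq F]
    (b : ℕ) (hb : 2 ≤ b)
    (t : Fin b → F) (ht : Function.Injective t)
    (P : Fin b → Fin 4 → (Fin 2 → F))
    -- no three of the four points in each fiber are collinear
    (hP : ∀ (i : Fin b) (j : Fin 4), LinearIndependent F
      (fun j' : {j' : Fin 4 // j' ≠ j} =>
        (((1 : F), P i j') : F × (Fin 2 → F)))) :
    -- the code has dimension k = 3b - 2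
    Module.finrank F (Submodule.span F
      {w : Fin b × Fin 4 → F |
        ∃ (a₀ : Polynomial F) (a : Fin 2 → Polynomial F),
          a₀.degree ≤ ((b - 1 : ℕ) : WithBot ℕ) ∧
          (∀ ℓ, (a ℓ).degree ≤ ((b - 2 : ℕ) : WithBot ℕ)) ∧
          w = fun p => a₀.eval (t p.1)
            + ∑ ℓ : Fin 2, (a ℓ).eval (t p.1) * P p.1 p.2 ℓ})
      = 3 * b - 2 ∧
    -- every nonzero codeword has Hamming weight at least 4
    (∀ w ∈ Submodule.span F
      {w : Fin b × Fin 4 → F |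
        ∃ (a₀ : Polynomial F) (a : Fin 2 → Polynomial F),
          a₀.degree ≤ ((b - 1 : ℕ) : WithBot ℕ) ∧
          (∀ ℓ, (a ℓ).degree ≤ ((b - 2 : ℕ) : WithBot ℕ)) ∧
          w = fun p => a₀.eval (t p.1)
            + ∑ ℓ : Fin 2, (a ℓ).eval (t p.1) * P p.1 p.2 ℓ},
      w ≠ 0 → 4 ≤ hammingNorm w) ∧
    -- and some nonzero codeword has Hamming weight exactly 4, so d = 4
    (∃ w ∈ Submodule.span F
      {w : Fin b × Fin 4 → F |
        ∃ (a₀ : Polynomial F) (a : Fin 2 → Polynomial F),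
          a₀.degree ≤ ((b - 1 : ℕ) : WithBot ℕ) ∧
          (∀ ℓ, (a ℓ).degree ≤ ((b - 2 : ℕ) : WithBot ℕ)) ∧
          w = fun p => a₀.eval (t p.1)
            + ∑ ℓ : Fin 2, (a ℓ).eval (t p.1) * P p.1 p.2 ℓ},
      w ≠ 0 ∧ hammingNorm w = 4) ∧
    -- local recoverability with locality 3: the value at any point of a fiber is
    -- determined by the values at the other three points of the same fiber
    (∀ (i : Fin b) (j : Fin 4) (a₀ a₀' : Polynomial F) (a a' : Fin 2 → Polynomial F),
      a₀.degree ≤ ((b - 1 : ℕ) : WithBot ℕ) → a₀'.degree ≤ ((b - 1 : ℕ) : WithBot ℕ) →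
      (∀ ℓ, (a ℓ).degree ≤ ((b - 2 : ℕ) : WithBot ℕ)) →
      (∀ ℓ, (a' ℓ).degree ≤ ((b - 2 : ℕ) : WithBot ℕ)) →
      (∀ j' : Fin 4, j' ≠ j →
        a₀.eval (t i) + ∑ ℓ : Fin 2, (a ℓ).eval (t i) * P i j' ℓ
          = a₀'.eval (t i) + ∑ ℓ : Fin 2, (a' ℓ).eval (t i) * P i j' ℓ) →
      a₀.eval (t i) + ∑ ℓ : Fin 2, (a ℓ).eval (t i) * P i j ℓ
        = a₀'.eval (t i) + ∑ ℓ : Fin 2, (a' ℓ).eval (t i) * P i j ℓ) ∧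
    -- optimality: d = n - k - ⌈k/3⌉ + 2 for n = 4b on k = 3b - 2
    (4 : ℤ) = 4 * (b : ℤ) - (3 * (b : ℤ) - 2)
        - ⌈(3 * (b : ℚ) - 2) / 3⌉ + 2 := by
  have hκ : Fintype.card (Fin 4) = 2 + 2 := rfl
  have hcard : Fintype.card (Fin b) = b := Fintype.card_fin b
  rw [span_eq_range_baselineMap]
  refine ⟨?_, ?_, ?_, ?_, ?_⟩
  · rw [finrank_range_baselineMap ht (by omega) (by omega) hP hκ]
    omega
  · rintro _ ⟨a, rfl⟩ ha
    exact four_le_hammingNorm_baselineMap ht (by omega) hP hκ le_rfl ha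
  · have : Nonempty (Fin b) := ⟨⟨0, by omega⟩⟩
    obtain ⟨a, ha⟩ :=
      exists_hammingNorm_baselineMap_eq_card (P := P) (M := b - 1) (N := b - 2) ht (by omega)
    exact ⟨_, ⟨a, rfl⟩, hammingNorm_pos_iff.mp (by simp [ha]), ha⟩
  · intro i j a₀ a₀' a a' _ _ _ _ h
    exact InGeneralPosition.add_dotProduct_eq_of_forall_ne (hP i) hκ h
  · have hceil : ⌈(3 * (b : ℚ) - 2) / 3⌉ = b := by
      rw [show (3 * (b : ℚ) - 2) / 3 = -2 / 3 + (b : ℤ) by push_cast; ring, Int.ceil_add_intCast]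
      norm_num
    rw [hceil]
    ring

/-- a baseline code with `r = 3`, `M = b-1`, `N = b-2` (four points in each
of `b` fibers, no three collinear) has length `n = 4b`, dimension `k = 3b-2`, minimum
distance `d = 4`, is locally recoverable with locality `3`, and satisfies
`d = n - k - ⌈k/3⌉ + 2`, i.e. it is an optimal LR code. -/
theorem stmt_6 (F : Type) [Field F] [Fintype F] [DecidableEq F]
    (b : ℕ) (hb : 2 ≤ b)
    (t : Fin b → F) (ht : Function.Injective t)
    (P : Fin b → Fin 4 → (Fin 2 → F))
    -- no three of the four points in each fiber are collinear
    (hP : ∀ (i : Fin b) (j : Fin 4), LinearIndependent F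
      (fun j' : {j' : Fin 4 // j' ≠ j} =>
        (((1 : F), P i j') : F × (Fin 2 → F)))) :
    -- the code has dimension k = 3b - 2
    Module.finrank F (Submodule.span F
      {w : Fin b × Fin 4 → F |
        ∃ (a₀ : Polynomial F) (a : Fin 2 → Polynomial F),
          a₀.degree ≤ ((b - 1 : ℕ) : WithBot ℕ) ∧
          (∀ ℓ, (a ℓ).degree ≤ ((b - 2 : ℕ) : WithBot ℕ)) ∧
          w = fun p => a₀.eval (t p.1)
            + ∑ ℓ : Fin 2, (a ℓ).eval (t p.1) * P p.1 p.2 ℓ})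
      = 3 * b - 2 ∧
    -- every nonzero codeword has Hamming weight at least 4
    (∀ w ∈ Submodule.span F
      {w : Fin b × Fin 4 → F |
        ∃ (a₀ : Polynomial F) (a : Fin 2 → Polynomial F),
          a₀.degree ≤ ((b - 1 : ℕ) : WithBot ℕ) ∧
          (∀ ℓ, (a ℓ).degree ≤ ((b - 2 : ℕ) : WithBot ℕ)) ∧
          w = fun p => a₀.eval (t p.1)
            + ∑ ℓ : Fin 2, (a ℓ).eval (t p.1) * P p.1 p.2 ℓ},
      w ≠ 0 → 4 ≤ hammingNorm w) ∧
    -- and some nonzero codeword has Hamming weight exactly 4, so d = 4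
    (∃ w ∈ Submodule.span F
      {w : Fin b × Fin 4 → F |
        ∃ (a₀ : Polynomial F) (a : Fin 2 → Polynomial F),
          a₀.degree ≤ ((b - 1 : ℕ) : WithBot ℕ) ∧
          (∀ ℓ, (a ℓ).degree ≤ ((b - 2 : ℕ) : WithBot ℕ)) ∧
          w = fun p => a₀.eval (t p.1)
            + ∑ ℓ : Fin 2, (a ℓ).eval (t p.1) * P p.1 p.2 ℓ},
      w ≠ 0 ∧ hammingNorm w = 4) ∧
    -- local recoverability with locality 3: the value at any point of a fiber is
    -- determined by the values at the other three points of the same fiber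
    (∀ (i : Fin b) (j : Fin 4) (a₀ a₀' : Polynomial F) (a a' : Fin 2 → Polynomial F),
      a₀.degree ≤ ((b - 1 : ℕ) : WithBot ℕ) → a₀'.degree ≤ ((b - 1 : ℕ) : WithBot ℕ) →
      (∀ ℓ, (a ℓ).degree ≤ ((b - 2 : ℕ) : WithBot ℕ)) →
      (∀ ℓ, (a' ℓ).degree ≤ ((b - 2 : ℕ) : WithBot ℕ)) →
      (∀ j' : Fin 4, j' ≠ j →
        a₀.eval (t i) + ∑ ℓ : Fin 2, (a ℓ).eval (t i) * P i j' ℓ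
          = a₀'.eval (t i) + ∑ ℓ : Fin 2, (a' ℓ).eval (t i) * P i j' ℓ) →
      a₀.eval (t i) + ∑ ℓ : Fin 2, (a ℓ).eval (t i) * P i j ℓ
        = a₀'.eval (t i) + ∑ ℓ : Fin 2, (a' ℓ).eval (t i) * P i j ℓ) ∧
    -- optimality: d = n - k - ⌈k/3⌉ + 2 for n = 4b on k = 3b - 2
    (4 : ℤ) = 4 * (b : ℤ) - (3 * (b : ℤ) - 2)
        - ⌈(3 * (b : ℚ) - 2) / 3⌉ + 2 :=
  stmt_6_general F b hb t ht P hP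
end

section
/- Let F_q be a finite field, r ≥ 2 an integer, and g ∈ F_q[x] a polynomial of degree exactly r+1. Let t_1,…,t_b ∈ F_q be distinct elements such that for each i the equation g(x) = t_i has r+1 distinct roots x_{i,1},…,x_{i,r+1} in F_q (so the x_{i,j} are n = b(r+1) distinct elements of F_q). Let N ≥ 0 and let a_0,…,a_{r−1} ∈ F_q[t] be polynomials of degree at most N, not all zero. Then the polynomial h(x) = a_0(g(x)) + Σ_{ℓ=1}^{r−1} a_ℓ(g(x)) x^ℓ ∈ F_q[x] is nonzero of degree at most N(r+1) + r − 1, and consequently the number of pairs (i,j) with a_0(t_i) + Σ_{ℓ=1}^{r−1} a_ℓ(t_i) x_{i,j}^ℓ = 0 is at most N(r+1) + r − 1. In particular the Tamo–Barg evaluation code, obtained by evaluating all such tuples (a_0,…,a_{r−1}) at the n points (x_{i,j}, t_i), has minimum distance at least n − N(r+1) − r + 1. -/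
/-!
Since `deg g = r + 1`, a nonzero term `a_ℓ(g) X^ℓ` with `ℓ < r + 1` has degree
`(r + 1) deg a_ℓ + ℓ ≡ ℓ (mod r + 1)`, so distinct nonzero terms never share a degree and
`h = Σ a_ℓ(g) X^ℓ` is nonzero of degree at most `N(r + 1) + r - 1`. Since `g(x_{i,j}) = t_i`, the
codeword entry at `(i, j)` is `h(x_{i,j})`, and the `x_{i,j}` are distinct, so at most `deg h`
entries vanish.
-/

open Finset Polynomial
open scoped Function

namespace Polynomial

theorem natDegree_sum_comp_mul_X_pow_le {R : Type*} [Semiring R] (g : R[X]) {r N : ℕ}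
    (a : Fin r → R[X]) (ha : ∀ ℓ, (a ℓ).natDegree ≤ N) :
    (∑ ℓ : Fin r, (a ℓ).comp g * X ^ (ℓ : ℕ)).natDegree ≤ N * g.natDegree + r - 1 := by
  refine natDegree_sum_le_of_forall_le _ _ fun ℓ _ => ?_
  have hℓ := ℓ.isLt
  have hcomp : ((a ℓ).comp g).natDegree ≤ N * g.natDegree :=
    natDegree_comp_le.trans (Nat.mul_le_mul_right _ (ha ℓ))
  calc ((a ℓ).comp g * X ^ (ℓ : ℕ)).natDegree
      ≤ ((a ℓ).comp g).natDegree + ℓ := natDegree_mul_le_of_le le_rfl (natDegree_X_pow_le _)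
    _ ≤ N * g.natDegree + r - 1 := by omega

theorem eval_sum_comp_mul_X_pow {R : Type*} [CommSemiring R] (g : R[X]) {r : ℕ}
    (a : Fin r → R[X]) (y : R) :
    (∑ ℓ : Fin r, (a ℓ).comp g * X ^ (ℓ : ℕ)).eval y
      = ∑ ℓ : Fin r, (a ℓ).eval (g.eval y) * y ^ (ℓ : ℕ) := by
  simp only [eval_finsetSum, eval_mul, eval_comp, eval_pow, eval_X]

section Domain

variable {R : Type*} [CommRing R] [IsDomain R]

theorem comp_ne_zero_of_natDegree_ne_zero {p q : R[X]} (hp : p ≠ 0) (hq : q.natDegree ≠ 0) :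
    p.comp q ≠ 0 := by
  rw [← leadingCoeff_ne_zero, leadingCoeff_comp hq]
  exact mul_ne_zero (leadingCoeff_ne_zero.mpr hp)
    (pow_ne_zero _ (leadingCoeff_ne_zero.mpr (ne_zero_of_natDegree_gt (Nat.pos_of_ne_zero hq))))

theorem natDegree_comp_mul_X_pow {p q : R[X]} (hp : p ≠ 0) (hq : q.natDegree ≠ 0) (n : ℕ) :
    (p.comp q * X ^ n).natDegree = p.natDegree * q.natDegree + n := by
  rw [natDegree_mul_X_pow n (comp_ne_zero_of_natDegree_ne_zero hp hq), natDegree_comp]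

theorem sum_comp_mul_X_pow_ne_zero {g : R[X]} {r : ℕ} (hr : r ≤ g.natDegree)
    (a : Fin r → R[X]) (ha : ∃ ℓ, a ℓ ≠ 0) :
    ∑ ℓ : Fin r, (a ℓ).comp g * X ^ (ℓ : ℕ) ≠ 0 := by
  obtain ⟨ℓ₀, hℓ₀⟩ := ha
  have hg : g.natDegree ≠ 0 := by have := ℓ₀.isLt; omega
  have hdeg : ∀ ℓ : Fin r, a ℓ ≠ 0 →
      ((a ℓ).comp g * X ^ (ℓ : ℕ)).degree
        = (((a ℓ).natDegree * g.natDegree + ℓ : ℕ) : WithBot ℕ) := by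
    intro ℓ hℓ
    rw [degree_eq_natDegree (mul_ne_zero (comp_ne_zero_of_natDegree_ne_zero hℓ hg)
      (pow_ne_zero _ X_ne_zero)), natDegree_comp_mul_X_pow hℓ hg]
  have hdisjoint : Set.Pairwise {ℓ | ℓ ∈ univ ∧ (a ℓ).comp g * X ^ (ℓ : ℕ) ≠ 0}
      (Ne on fun ℓ : Fin r => ((a ℓ).comp g * X ^ (ℓ : ℕ)).degree) := by
    rintro ℓ ⟨-, hℓ⟩ ℓ' ⟨-, hℓ'⟩ hne heq
    dsimp only at heq
    rw [hdeg ℓ (fun h => hℓ (by simp [h])), hdeg ℓ' (fun h => hℓ' (by simp [h])),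
      Nat.cast_inj] at heq
    have := congrArg (· % g.natDegree) heq
    simp only [Nat.mul_add_mod_self_right, Nat.mod_eq_of_lt (by omega : (ℓ : ℕ) < g.natDegree),
      Nat.mod_eq_of_lt (by omega : (ℓ' : ℕ) < g.natDegree)] at this
    exact hne (Fin.ext this)
  rw [← degree_ne_bot, degree_sum_eq_of_disjoint _ _ hdisjoint]
  refine ne_bot_of_le_ne_bot ?_ (le_sup (mem_univ ℓ₀))
  rw [hdeg ℓ₀ hℓ₀]
  exact WithBot.coe_ne_bot

theorem card_filter_eval_eq_zero_le [DecidableEq R] {ι : Type*} [Fintype ι] {p : R[X]}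
    (hp : p ≠ 0) {x : ι → R} (hx : Function.Injective x) :
    #{i | p.eval (x i) = 0} ≤ p.natDegree := by
  rw [← card_image_of_injective _ hx]
  refine card_le_degree_of_subset_roots fun y hy => ?_
  obtain ⟨i, hi, rfl⟩ := mem_image.mp hy
  exact (mem_roots hp).mpr (mem_filter.mp hi).2

end Domain

end Polynomial

theorem hammingNorm_add_card_filter_eq_zero {ι β : Type*} [Fintype ι] [Zero β] [DecidableEq β]
    (f : ι → β) : hammingNorm f + #{i | f i = 0} = Fintype.card ι := by
  rw [hammingNorm, add_comm, card_filter_add_card_filter_not, card_univ]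

theorem stmt_8_general (F : Type) [Field F] [DecidableEq F]
    (r b N : ℕ)
    (g : Polynomial F) (hg : g.degree = ((r + 1 : ℕ) : WithBot ℕ))
    (t : Fin b → F)
    (x : Fin b → Fin (r + 1) → F)
    (hroot : ∀ i j, g.eval (x i j) = t i)
    (hx : Function.Injective (fun p : Fin b × Fin (r + 1) => x p.1 p.2))
    (a : Fin r → Polynomial F)
    (ha : ∀ ℓ, (a ℓ).degree ≤ (N : ℕ))
    (hne : ¬ ∀ ℓ, a ℓ = 0) :
    (∑ ℓ : Fin r, (a ℓ).comp g * Polynomial.X ^ (ℓ : ℕ)) ≠ 0 ∧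
    (∑ ℓ : Fin r, (a ℓ).comp g * Polynomial.X ^ (ℓ : ℕ)).natDegree
      ≤ N * (r + 1) + r - 1 ∧
    (Finset.univ.filter (fun p : Fin b × Fin (r + 1) =>
        ∑ ℓ : Fin r, (a ℓ).eval (t p.1) * (x p.1 p.2) ^ (ℓ : ℕ) = 0)).card
      ≤ N * (r + 1) + r - 1 ∧
    b * (r + 1) - (N * (r + 1) + r - 1)
      ≤ hammingNorm (fun p : Fin b × Fin (r + 1) =>
          ∑ ℓ : Fin r, (a ℓ).eval (t p.1) * (x p.1 p.2) ^ (ℓ : ℕ)) := by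
  have hgdeg : g.natDegree = r + 1 := natDegree_eq_of_degree_eq_some hg
  have hh_ne := sum_comp_mul_X_pow_ne_zero (g := g) (by omega) a (by simpa using hne)
  have hh_deg := natDegree_sum_comp_mul_X_pow_le g a fun ℓ => natDegree_le_iff_degree_le.mpr (ha ℓ)
  rw [hgdeg] at hh_deg
  have hzeros := (card_filter_eval_eq_zero_le hh_ne hx).trans hh_deg
  simp only [eval_sum_comp_mul_X_pow, hroot] at hzeros
  have hweight := hammingNorm_add_card_filter_eq_zero fun p : Fin b × Fin (r + 1) =>
    ∑ ℓ : Fin r, (a ℓ).eval (t p.1) * (x p.1 p.2) ^ (ℓ : ℕ)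
  rw [Fintype.card_prod, Fintype.card_fin, Fintype.card_fin] at hweight
  exact ⟨hh_ne, hh_deg, hzeros, by omega⟩

/-- Tamo–Barg codes. If `g` has degree exactly `r+1`, the `t_i` are distinct
with `g(x) = t_i` having `r+1` distinct roots `x_{i,j}` in `F_q` (all the `x_{i,j}` being
distinct), and `a_0, …, a_{r-1}` are polynomials of degree at most `N`, not all zero, then
`h(x) = Σ_ℓ a_ℓ(g(x)) x^ℓ` is nonzero of degree at most `N(r+1) + r - 1`; consequently at
most `N(r+1) + r - 1` of the evaluations `Σ_ℓ a_ℓ(t_i) x_{i,j}^ℓ` vanish, and the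
Tamo–Barg code has minimum distance at least `n - N(r+1) - r + 1` where `n = b(r+1)`. -/
theorem stmt_8 (F : Type) [Field F] [Fintype F] [DecidableEq F]
    (r b N : ℕ) (hr : 2 ≤ r) (hb : 1 ≤ b)
    (g : Polynomial F) (hg : g.degree = ((r + 1 : ℕ) : WithBot ℕ))
    (t : Fin b → F) (ht : Function.Injective t)
    (x : Fin b → Fin (r + 1) → F)
    (hroot : ∀ i j, g.eval (x i j) = t i)
    (hx : Function.Injective (fun p : Fin b × Fin (r + 1) => x p.1 p.2))
    (a : Fin r → Polynomial F)
    (ha : ∀ ℓ, (a ℓ).degree ≤ (N : ℕ))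
    (hne : ¬ ∀ ℓ, a ℓ = 0) :
    (∑ ℓ : Fin r, (a ℓ).comp g * Polynomial.X ^ (ℓ : ℕ)) ≠ 0 ∧
    (∑ ℓ : Fin r, (a ℓ).comp g * Polynomial.X ^ (ℓ : ℕ)).natDegree
      ≤ N * (r + 1) + r - 1 ∧
    (Finset.univ.filter (fun p : Fin b × Fin (r + 1) =>
        ∑ ℓ : Fin r, (a ℓ).eval (t p.1) * (x p.1 p.2) ^ (ℓ : ℕ) = 0)).card
      ≤ N * (r + 1) + r - 1 ∧
    b * (r + 1) - (N * (r + 1) + r - 1)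
      ≤ hammingNorm (fun p : Fin b × Fin (r + 1) =>
          ∑ ℓ : Fin r, (a ℓ).eval (t p.1) * (x p.1 p.2) ^ (ℓ : ℕ)) :=
  stmt_8_general F r b N g hg t x hroot hx a ha hne
end

section
/- Let α and r be positive integers with α dividing r+1 and α < r+1. Then Σ_{i=0}^{r−1} ⌈αi/(r+1)⌉ = (α+1)(r+1)/2 − 2α (in particular (α+1)(r+1) is even under these hypotheses). -/
/-!
Writing `r + 1 = α m`, the summand is `⌈i / m⌉`. Over the full range `i < α m`, the block
`k m ≤ i < (k + 1) m` contributes `m k + (m - 1)`, so twice the full sum is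
`m α (α - 1) + 2 α (m - 1)`; the omitted last term `⌈r / m⌉` equals `α` because `m ≥ 2`.
-/

open Finset

section CeilDiv

variable {K : Type*} [Field K] [LinearOrder K] [IsStrictOrderedRing K] [FloorRing K]

lemma ceil_natCast_div_eq_one {j m : ℕ} (hj : 0 < j) (hjm : j ≤ m) :
    ⌈(j : K) / m⌉ = 1 := by
  have hm : (0 : K) < m := by exact_mod_cast hj.trans_le hjm
  rw [Int.ceil_eq_iff]
  constructor
  · rw [Int.cast_one, sub_self]
    positivity
  · rw [Int.cast_one, div_le_one hm]
    exact_mod_cast hjm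

lemma sum_range_ceil_natCast_div_self {m : ℕ} (hm : 0 < m) :
    ∑ j ∈ range m, ⌈(j : K) / m⌉ = (m : ℤ) - 1 := by
  obtain ⟨m, rfl⟩ := Nat.exists_eq_add_one_of_ne_zero hm.ne'
  rw [sum_range_succ']
  have hone : ∀ j ∈ range m, ⌈((j + 1 : ℕ) : K) / (m + 1 : ℕ)⌉ = 1 := fun j hj =>
    ceil_natCast_div_eq_one j.succ_pos (by simpa using (mem_range.mp hj).le)
  rw [sum_congr rfl hone]
  simp

lemma two_mul_sum_range_mul_ceil_natCast_div {m : ℕ} (hm : 0 < m) (a : ℕ) :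
    2 * ∑ i ∈ range (a * m), ⌈(i : K) / m⌉ = (m : ℤ) * a * (a - 1) + 2 * a * (m - 1) := by
  induction a with
  | zero => simp
  | succ a ih =>
    have hblock : ∀ j ∈ range m, ⌈((a * m + j : ℕ) : K) / m⌉ = ⌈(j : K) / m⌉ + a := by
      intro j _
      have hm' : (m : K) ≠ 0 := by exact_mod_cast hm.ne'
      have hsplit : ((a * m + j : ℕ) : K) / m = (j : K) / m + (a : ℤ) := by
        field_simp
        push_cast
        ring
      rw [hsplit, Int.ceil_add_intCast]
    rw [Nat.succ_mul, sum_range_add, sum_congr rfl hblock, sum_add_distrib,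
      sum_range_ceil_natCast_div_self hm, sum_const, card_range, nsmul_eq_mul]
    push_cast
    linear_combination ih

lemma ceil_natCast_div_eq_of_add_one_eq_mul {r a m : ℕ} (h : r + 1 = a * m) (hm : 1 < m) :
    ⌈(r : K) / m⌉ = a := by
  have hm0 : (0 : K) < m := by positivity
  have hr : (r : K) = a * m - 1 := by
    rw [eq_sub_iff_add_eq]
    exact_mod_cast h
  have hm1 : (1 : K) < m := by exact_mod_cast hm
  rw [Int.ceil_eq_iff, lt_div_iff₀ hm0, div_le_iff₀ hm0, hr]
  push_cast
  constructor <;> nlinarith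

end CeilDiv

theorem stmt_10_general (α r : ℕ)
    (hdvd : α ∣ (r + 1)) (hlt : α < r + 1) :
    Even ((α + 1) * (r + 1)) ∧
    (∑ i ∈ Finset.range r, ⌈((α : ℚ) * (i : ℚ)) / ((r : ℚ) + 1)⌉)
      = ((α : ℤ) + 1) * ((r : ℤ) + 1) / 2 - 2 * (α : ℤ) := by
  obtain ⟨m, hm⟩ := hdvd
  have hα : α ≠ 0 := by rintro rfl; omega
  have hm2 : 1 < m := by
    by_contra! h
    interval_cases m <;> omega
  have heven : Even ((α + 1) * (r + 1)) := by
    rw [hm, ← mul_assoc, mul_comm (α + 1)]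
    exact (Nat.even_mul_succ_self α).mul_right m
  refine ⟨heven, ?_⟩
  have hsummand : ∀ i : ℕ, ⌈(α : ℚ) * i / ((r : ℚ) + 1)⌉ = ⌈(i : ℚ) / m⌉ := by
    intro i
    rw [show (r : ℚ) + 1 = α * m by exact_mod_cast hm, mul_div_mul_left _ _ (by exact_mod_cast hα)]
  have hfull := two_mul_sum_range_mul_ceil_natCast_div (K := ℚ) (by omega : 0 < m) α
  rw [← hm, sum_range_succ, ceil_natCast_div_eq_of_add_one_eq_mul hm hm2] at hfull
  have hmZ : ((r : ℤ) + 1) = α * m := by exact_mod_cast hm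
  have htwice : 2 * ∑ i ∈ range r, ⌈(i : ℚ) / m⌉ = ((α : ℤ) + 1) * (r + 1) - 4 * α := by
    linear_combination hfull - ((α : ℤ) + 1) * hmZ
  simp only [hsummand]
  generalize ((α : ℤ) + 1) * (r + 1) = P at htwice ⊢
  omega

/-- for positive integers `α, r` with `α ∣ (r+1)` and `α < r+1`, the sum
`Σ_{i=0}^{r-1} ⌈αi/(r+1)⌉` equals `(α+1)(r+1)/2 - 2α` (and `(α+1)(r+1)` is even). -/
theorem stmt_10 (α r : ℕ) (hα : 0 < α) (hr : 0 < r)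
    (hdvd : α ∣ (r + 1)) (hlt : α < r + 1) :
    Even ((α + 1) * (r + 1)) ∧
    (∑ i ∈ Finset.range r, ⌈((α : ℚ) * (i : ℚ)) / ((r : ℚ) + 1)⌉)
      = ((α : ℤ) + 1) * ((r : ℤ) + 1) / 2 - 2 * (α : ℤ) :=
  stmt_10_general α r hdvd hlt
end

section
/- Assume the refined P¹×P¹ setup. Then for every σ ∈ V with not all coefficient polynomials a_0,…,a_{r−1} zero, the number of pairs (i,j), 1 ≤ i ≤ b, 1 ≤ j ≤ r+1, with σ(x_{i,j}, t_i) = 0 is at most N(r+1) = n − 𝔡. Equivalently, every nonzero codeword of the evaluation code C = {(σ(x_{i,j}, t_i))_{i,j} : σ ∈ V} ⊆ F_q^n has Hamming weight at least 𝔡, so the minimum distance of C is at least 𝔡. -/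
/-!
Let `D(t)` be the determinant of multiplication by `σ` on `F[t][x]/(x^(r+1) - t^α - 1)`, i.e. the
norm of `σ` down to `F[t]`. Since `x^(r+1) - t^α - 1` is prime, `D ≠ 0`. Giving `x` the weight
`α/(r+1)` (the weight of `t` being `1`), every term of the Leibniz expansion of `D` has degree at
most `N(r+1)`. At `t = t_i` the rows of the Vandermonde matrix of the fibre `x_{i,1}, …, x_{i,r+1}`
are left eigenvectors of the multiplication matrix, with eigenvalues `σ(x_{i,j}, t_i)`; hence each
zero of `σ` on the fibre contributes a factor `t - t_i` to `D`, and the zeros number at most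
`deg D ≤ N(r+1)`.
-/

open Polynomial Finset Matrix

lemma pow_card_dvd_det_of_dvd_rows {R ι : Type*} [CommRing R] [Fintype ι] [DecidableEq ι]
    (M : Matrix ι ι R) (p : R) (s : Finset ι) (h : ∀ j ∈ s, ∀ k, p ∣ M j k) :
    p ^ #s ∣ M.det := by
  choose B hB using h
  let M' : Matrix ι ι R := of fun j k => if hj : j ∈ s then B j hj k else M j k
  have hM : M = diagonal (fun j => if j ∈ s then p else 1) * M' := by
    ext j k
    by_cases hj : j ∈ s <;> simp [M', hj, hB]
  refine ⟨M'.det, ?_⟩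
  rw [hM, det_mul, det_diagonal, prod_ite_mem, univ_inter, prod_const]

lemma natDegree_det_le_of_weight {R ι : Type*} [CommRing R] [Fintype ι] [DecidableEq ι]
    (M : Matrix ι ι R[X]) (m D : ℕ) (w : ι → ℕ)
    (h : ∀ j k, M j k ≠ 0 → m * (M j k).natDegree + w j ≤ D + w k) :
    m * M.det.natDegree ≤ Fintype.card ι * D := by
  suffices hterm : ∀ π : Equiv.Perm ι, m * (∏ k, M (π k) k).natDegree ≤ Fintype.card ι * D by
    rcases Nat.eq_zero_or_pos m with rfl | hm
    · rw [zero_mul]; exact Nat.zero_le _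
    rw [mul_comm, ← Nat.le_div_iff_mul_le hm, det_apply]
    refine natDegree_sum_le_of_forall_le _ _ fun π _ => ?_
    rw [Units.smul_def]
    refine (natDegree_smul_le _ _).trans ?_
    rw [Nat.le_div_iff_mul_le hm, mul_comm]
    exact hterm π
  intro π
  by_cases h0 : ∀ k, M (π k) k ≠ 0
  · have hsum : ∑ k, (m * (M (π k) k).natDegree + w (π k)) ≤ ∑ k, (D + w k) :=
      sum_le_sum fun k _ => h _ _ (h0 k)
    rw [sum_add_distrib, sum_add_distrib, Equiv.sum_comp π w, ← mul_sum, sum_const, card_univ,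
      smul_eq_mul] at hsum
    calc m * (∏ k, M (π k) k).natDegree ≤ m * ∑ k, (M (π k) k).natDegree :=
          Nat.mul_le_mul_left m (natDegree_prod_le _ _)
      _ ≤ Fintype.card ι * D := by omega
  · obtain ⟨k, hk⟩ := not_forall_not.mp h0
    rw [prod_eq_zero (f := fun k => M (π k) k) (mem_univ k) hk, natDegree_zero, mul_zero]
    exact Nat.zero_le _

lemma sum_le_natDegree_of_pow_dvd {ι F : Type*} [Fintype ι] [Field F] {p : F[X]} (hp : p ≠ 0)
    {t : ι → F} (ht : Function.Injective t) (k : ι → ℕ) (h : ∀ i, (X - C (t i)) ^ k i ∣ p) :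
    ∑ i, k i ≤ p.natDegree := by
  have hprod : ∏ i, (X - C (t i)) ^ k i ∣ p :=
    prod_dvd_of_coprime (fun i _ j _ hij => ((pairwise_coprime_X_sub_C ht) hij).pow) fun i _ => h i
  calc ∑ i, k i = (∏ i, (X - C (t i)) ^ k i).natDegree := by
        simp [natDegree_prod _ _ fun i _ => pow_ne_zero _ (X_sub_C_ne_zero (t i))]
    _ ≤ p.natDegree := natDegree_le_of_dvd hprod hp

section MulMatrix

variable {R : Type*} [CommRing R] {n : ℕ}

/-- The matrix of multiplication by `∑ A i * x ^ i` on `R[x]/(x^n - c)` in the basis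
`1, x, …, x^(n-1)`: the index `j - k` is taken in `Fin n`, and the entries where it wraps around
pick up the factor `c = x^n`. -/
def mulMatrix (c : R) (A : Fin n → R) : Matrix (Fin n) (Fin n) R :=
  of fun j k => (if k ≤ j then 1 else c) * A (j - k)

lemma mulMatrix_map {S : Type*} [CommRing S] (f : R →+* S) (c : R) (A : Fin n → R) :
    (mulMatrix c A).map f = mulMatrix (f c) (f ∘ A) := by
  ext j k
  simp only [mulMatrix, map_apply, of_apply, map_mul, Function.comp_apply]
  split_ifs <;> simp

lemma pow_val_sub_mul_pow {ξ c : R} (hξ : ξ ^ n = c) (l k : Fin n) :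
    ξ ^ ((l - k : Fin n) : ℕ) * ξ ^ (k : ℕ) = (if k ≤ l then 1 else c) * ξ ^ (l : ℕ) := by
  rw [← pow_add]
  split_ifs with h
  · rw [Fin.sub_val_of_le h, Nat.sub_add_cancel h, one_mul]
  · rw [Fin.coe_sub_iff_lt.mpr (not_le.mp h), ← hξ, ← pow_add]
    congr 1
    omega

lemma vecMul_mulMatrix [NeZero n] {ξ c : R} (hξ : ξ ^ n = c) (A : Fin n → R) :
    (fun l : Fin n => ξ ^ (l : ℕ)) ᵥ* mulMatrix c A
      = (∑ i, A i * ξ ^ (i : ℕ)) • fun k : Fin n => ξ ^ (k : ℕ) := by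
  ext k
  simp only [vecMul, dotProduct, mulMatrix, of_apply, Pi.smul_apply, smul_eq_mul, sum_mul]
  rw [← Equiv.sum_comp (Equiv.subRight k) (fun i => A i * ξ ^ (i : ℕ) * ξ ^ (k : ℕ))]
  refine sum_congr rfl fun l _ => ?_
  rw [Equiv.subRight_apply, mul_assoc, pow_val_sub_mul_pow hξ]
  ring

lemma sum_of_mul_root_pow_ne_zero [NeZero n] (c : R) {v : Fin n → R} (hv : v ≠ 0) :
    ∑ i, AdjoinRoot.of (X ^ n - C c) (v i) * AdjoinRoot.root (X ^ n - C c) ^ (i : ℕ) ≠ 0 := by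
  classical
  obtain ⟨i, hi⟩ := Function.ne_iff.mp hv
  have : Nontrivial R := nontrivial_of_ne _ _ hi
  have hmonic : (X ^ n - C c).Monic := monic_X_pow_sub_C c (NeZero.ne n)
  have hofFn : ofFn n v ≠ 0 := fun h => hv (injective_ofFn n (h.trans (ofFn_zero n).symm))
  have hdeg : (ofFn n v).degree < (X ^ n - C c).degree := by
    rw [degree_X_pow_sub_C (NeZero.pos n)]
    exact ofFn_degree_lt v
  have hsum : ∑ i, AdjoinRoot.of (X ^ n - C c) (v i) * AdjoinRoot.root (X ^ n - C c) ^ (i : ℕ)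
      = AdjoinRoot.mk (X ^ n - C c) (ofFn n v) := by
    rw [← AdjoinRoot.aeval_eq, ofFn_eq_sum_monomial, map_sum]
    simp only [aeval_monomial, AdjoinRoot.algebraMap_eq]
  rw [hsum, Ne, AdjoinRoot.mk_eq_zero]
  exact hmonic.not_dvd_of_degree_lt hofFn hdeg

lemma det_mulMatrix_ne_zero [IsDomain R] [NeZero n] {c : R} (hprime : Prime (X ^ n - C c))
    {A : Fin n → R} (hA : A ≠ 0) : (mulMatrix c A).det ≠ 0 := by
  intro hdet
  obtain ⟨v, hv, hMv⟩ := exists_mulVec_eq_zero_iff.mpr hdet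
  have := AdjoinRoot.isDomain_of_prime hprime
  set φ := AdjoinRoot.of (X ^ n - C c)
  set ξ := AdjoinRoot.root (X ^ n - C c)
  have hξ : ξ ^ n = φ c := by
    have h := AdjoinRoot.mk_self (f := X ^ n - C c)
    rwa [map_sub, map_pow, AdjoinRoot.mk_X, AdjoinRoot.mk_C, sub_eq_zero] at h
  have key : (∑ i, φ (A i) * ξ ^ (i : ℕ)) * ∑ k, φ (v k) * ξ ^ (k : ℕ) = 0 := by
    have hMv' : (mulMatrix c A).map φ *ᵥ (φ ∘ v) = 0 := by
      ext i
      rw [← RingHom.map_mulVec, hMv, Pi.zero_apply, Pi.zero_apply, map_zero]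
    have h := dotProduct_mulVec (fun l : Fin n => ξ ^ (l : ℕ)) ((mulMatrix c A).map φ) (φ ∘ v)
    rw [hMv', dotProduct_zero, mulMatrix_map, vecMul_mulMatrix hξ, smul_dotProduct] at h
    simpa [dotProduct, mul_comm] using h.symm
  rcases mul_eq_zero.mp key with h | h
  · exact sum_of_mul_root_pow_ne_zero c hA h
  · exact sum_of_mul_root_pow_ne_zero c hv h

lemma natDegree_det_mulMatrix_le [NeZero n] {c : R[X]} {A : Fin n → R[X]} {α N : ℕ}
    (hc : c.natDegree ≤ α) (hA : ∀ d, A d ≠ 0 → n * (A d).natDegree + α * d ≤ n * N) :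
    (mulMatrix c A).det.natDegree ≤ n * N := by
  have hentry : ∀ j k, mulMatrix c A j k ≠ 0 →
      n * (mulMatrix c A j k).natDegree + α * j ≤ n * N + α * k := by
    intro j k hjk
    have hA' := hA (j - k) (right_ne_zero_of_mul hjk)
    simp only [mulMatrix, of_apply] at hjk ⊢
    split_ifs with hkj
    · have hd : α * (j - k : Fin n) + α * k = α * j := by
        rw [← mul_add, Fin.sub_val_of_le hkj, Nat.sub_add_cancel hkj]
      rw [one_mul]
      omega
    · have hd : α * (j - k : Fin n) + α * k = n * α + α * j := by
        rw [← mul_add, Fin.coe_sub_iff_lt.mpr (not_le.mp hkj), mul_comm n, ← mul_add]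
        congr 1
        omega
      have hdeg : n * (c * A (j - k)).natDegree ≤ n * α + n * (A (j - k)).natDegree := by
        rw [← mul_add]
        exact Nat.mul_le_mul_left n (natDegree_mul_le.trans (Nat.add_le_add_right hc _))
      omega
  have h := natDegree_det_le_of_weight _ n (n * N) (fun j : Fin n => α * j) hentry
  rw [Fintype.card_fin] at h
  exact Nat.le_of_mul_le_mul_left h (NeZero.pos n)

end MulMatrix

lemma pow_dvd_det_mulMatrix {F : Type*} [Field F] [DecidableEq F] {n : ℕ} [NeZero n]
    (c : F[X]) (A : Fin n → F[X]) (t₀ : F) {x : Fin n → F} (hx : Function.Injective x)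
    (hroot : ∀ j, x j ^ n = c.eval t₀) :
    (X - C t₀) ^ #{j | ∑ i, (A i).eval t₀ * x j ^ (i : ℕ) = 0} ∣ (mulMatrix c A).det := by
  set V := vandermonde x
  have hV : IsUnit (C V.det) := isUnit_C.mpr (IsUnit.mk0 _ (det_vandermonde_ne_zero_iff.mpr hx))
  have hrows : ∀ j ∈ ({j | ∑ i, (A i).eval t₀ * x j ^ (i : ℕ) = 0} : Finset (Fin n)), ∀ k,
      X - C t₀ ∣ (V.map C * mulMatrix c A) j k := by
    intro j hj k
    have heval : eval t₀ ((V.map C * mulMatrix c A) j k)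
        = ((fun l : Fin n => x j ^ (l : ℕ)) ᵥ* (mulMatrix c A).map (evalRingHom t₀)) k := by
      simp [mul_apply, vecMul, dotProduct, V, eval_finsetSum]
    have hξ : x j ^ n = evalRingHom t₀ c := hroot j
    rw [mulMatrix_map, vecMul_mulMatrix hξ] at heval
    rw [dvd_iff_isRoot, IsRoot, heval, Pi.smul_apply, smul_eq_mul]
    simp only [Function.comp_apply, coe_evalRingHom]
    rw [(mem_filter.mp hj).2, zero_mul]
  have h := pow_card_dvd_det_of_dvd_rows _ _ _ hrows
  rwa [det_mul, show (V.map C).det = C V.det from (RingHom.map_det C V).symm,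
    hV.dvd_mul_left] at h

/-- `(α * d + r) / (r + 1)` is `⌈α d / (r + 1)⌉`, so the conclusion reads
`deg p + α d / (r + 1) ≤ N`: the term `p x^d` has weighted degree at most `N`. -/
lemma weighted_natDegree_le {R : Type*} [Semiring R] {p : R[X]} {r α N d : ℕ}
    (hε : (α * d + r) / (r + 1) ≤ N) (hp : p.degree ≤ ↑(N - (α * d + r) / (r + 1))) :
    (r + 1) * p.natDegree + α * d ≤ (r + 1) * N := by
  have hceil := Nat.lt_mul_div_succ (α * d + r) (by omega : 0 < r + 1)
  have hdeg := Nat.mul_le_mul_left (r + 1) (natDegree_le_of_degree_le hp)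
  have hεN := Nat.mul_le_mul_left (r + 1) hε
  generalize (α * d + r) / (r + 1) = ε at *
  rw [Nat.mul_sub] at hdeg
  rw [Nat.mul_add, Nat.mul_one] at hceil
  omega

lemma card_filter_eq_zero_add_hammingNorm {ι β : Type*} [Fintype ι] [Zero β] [DecidableEq β]
    (f : ι → β) : #{i | f i = 0} + hammingNorm f = Fintype.card ι :=
  card_filter_add_card_filter_not _

theorem stmt_11_general (F : Type) [Field F] [DecidableEq F]
    (r α b N : ℕ)
    -- N ≥ ⌈α(r-1)/(r+1)⌉
    (hN : (α * (r - 1) + r) / (r + 1) ≤ N)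
    -- x^{r+1} - t^α - 1 is irreducible in F_q[x,t] = (F_q[t])[x]
    (hirr : Irreducible (Polynomial.X ^ (r + 1)
        - Polynomial.C (Polynomial.X ^ α + 1) : Polynomial (Polynomial F)))
    (t : Fin b → F) (ht : Function.Injective t)
    (x : Fin b → Fin (r + 1) → F)
    -- the fiber over t_i consists of the r+1 distinct points x_{i,1}, …, x_{i,r+1}
    (hcurve : ∀ i j, (x i j) ^ (r + 1) = (t i) ^ α + 1)
    (hxinj : ∀ i, Function.Injective (x i))
    -- σ = Σ_i a_i(t) x^i ∈ V, with deg a_i ≤ N - ε_i, ε_i = ⌈αi/(r+1)⌉, not all a_i zero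
    (a : Fin r → Polynomial F)
    (ha : ∀ i : Fin r, (a i).degree ≤ ((N - (α * (i : ℕ) + r) / (r + 1) : ℕ) : WithBot ℕ))
    (hne : ¬ ∀ i, a i = 0) :
    (Finset.univ.filter (fun p : Fin b × Fin (r + 1) =>
        ∑ i : Fin r, (a i).eval (t p.1) * (x p.1 p.2) ^ (i : ℕ) = 0)).card
      ≤ N * (r + 1) ∧
    b * (r + 1) - N * (r + 1)
      ≤ hammingNorm (fun p : Fin b × Fin (r + 1) =>
          ∑ i : Fin r, (a i).eval (t p.1) * (x p.1 p.2) ^ (i : ℕ)) := by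
  set A : Fin (r + 1) → F[X] := Fin.snoc a 0
  have hA : A ≠ 0 := fun h => hne fun i => by simpa [A] using congrFun h i.castSucc
  have hσ : ∀ i j, ∑ l : Fin r, (a l).eval (t i) * x i j ^ (l : ℕ)
      = ∑ l, (A l).eval (t i) * x i j ^ (l : ℕ) := fun i j => by
    simp [A, Fin.sum_univ_castSucc]
  set D := (mulMatrix (X ^ α + 1) A).det
  have hD : D ≠ 0 := det_mulMatrix_ne_zero hirr.prime hA
  have hweight : ∀ d, A d ≠ 0 → (r + 1) * (A d).natDegree + α * d ≤ (r + 1) * N := by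
    refine Fin.lastCases (fun h => absurd (Fin.snoc_last _ _) h) fun i _ => ?_
    simp only [A, Fin.snoc_castSucc, Fin.val_castSucc]
    have hε : (α * i + r) / (r + 1) ≤ N :=
      (Nat.div_le_div_right (by gcongr; omega)).trans hN
    exact weighted_natDegree_le hε (ha i)
  have hDdeg : D.natDegree ≤ (r + 1) * N :=
    natDegree_det_mulMatrix_le ((natDegree_add_le _ _).trans (by simp)) hweight
  have hzeros : #{p : Fin b × Fin (r + 1) |
      ∑ i : Fin r, (a i).eval (t p.1) * (x p.1 p.2) ^ (i : ℕ) = 0} ≤ D.natDegree := by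
    rw [card_filter, Fintype.sum_prod_type]
    simp_rw [← card_filter, hσ]
    exact sum_le_natDegree_of_pow_dvd hD ht _ fun i =>
      pow_dvd_det_mulMatrix _ A (t i) (hxinj i) fun j => by simp [hcurve]
  have hcard := card_filter_eq_zero_add_hammingNorm fun p : Fin b × Fin (r + 1) =>
    ∑ i : Fin r, (a i).eval (t p.1) * (x p.1 p.2) ^ (i : ℕ)
  rw [Fintype.card_prod, Fintype.card_fin, Fintype.card_fin] at hcard
  rw [mul_comm N]
  exact ⟨hzeros.trans hDdeg, by omega⟩

/-- refined `ℙ¹×ℙ¹` setup. For every `σ ∈ V` with not all coefficient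
polynomials zero, the number of evaluation points `(x_{i,j}, t_i)` at which `σ`
vanishes is at most `N(r+1) = n - 𝔡`; equivalently every nonzero codeword of the
evaluation code has Hamming weight at least `𝔡 = n - N(r+1)`.

Here the ceiling `⌈αi/(r+1)⌉` is written as the natural-number division
`(α*i + r)/(r+1)`, which is exactly the ceiling of `αi/(r+1)`. -/
theorem stmt_11 (F : Type) [Field F] [Fintype F] [DecidableEq F]
    (r α b N : ℕ) (hr : 2 ≤ r) (hα : 1 ≤ α) (hb : 1 ≤ b)
    (hdvd : α ∣ (r + 1))
    -- N ≥ ⌈α(r-1)/(r+1)⌉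
    (hN : (α * (r - 1) + r) / (r + 1) ≤ N)
    -- x^{r+1} - t^α - 1 is irreducible in F_q[x,t] = (F_q[t])[x]
    (hirr : Irreducible (Polynomial.X ^ (r + 1)
        - Polynomial.C (Polynomial.X ^ α + 1) : Polynomial (Polynomial F)))
    (t : Fin b → F) (ht : Function.Injective t)
    (x : Fin b → Fin (r + 1) → F)
    -- the fiber over t_i consists of the r+1 distinct points x_{i,1}, …, x_{i,r+1}
    (hcurve : ∀ i j, (x i j) ^ (r + 1) = (t i) ^ α + 1)
    (hxinj : ∀ i, Function.Injective (x i))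
    -- σ = Σ_i a_i(t) x^i ∈ V, with deg a_i ≤ N - ε_i, ε_i = ⌈αi/(r+1)⌉, not all a_i zero
    (a : Fin r → Polynomial F)
    (ha : ∀ i : Fin r, (a i).degree ≤ ((N - (α * (i : ℕ) + r) / (r + 1) : ℕ) : WithBot ℕ))
    (hne : ¬ ∀ i, a i = 0) :
    (Finset.univ.filter (fun p : Fin b × Fin (r + 1) =>
        ∑ i : Fin r, (a i).eval (t p.1) * (x p.1 p.2) ^ (i : ℕ) = 0)).card
      ≤ N * (r + 1) ∧
    b * (r + 1) - N * (r + 1)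
      ≤ hammingNorm (fun p : Fin b × Fin (r + 1) =>
          ∑ i : Fin r, (a i).eval (t p.1) * (x p.1 p.2) ^ (i : ℕ)) :=
  stmt_11_general F r α b N hN hirr t ht x hcurve hxinj a ha hne
end

section
/- Let m ≥ 0 be an integer and let α, r be positive integers with α dividing r+1 and α < r+1. Then Σ_{i=0}^{r−1} ⌈i(α + m(r+1))/(r+1)⌉ = (α+1)(r+1)/2 − 2α + m·r(r−1)/2. -/
/-!
Write `r + 1 = α k`. Then `i (α + m (r + 1)) / (r + 1) = i m + i / k`, so the `i`-th term is
`i m + ⌈i / k⌉`. The values `⌈i / k⌉` are constant, equal to `a + 1`, on each block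
`a k < i ≤ (a + 1) k`, so summing block by block gives
`∑_{i < α k} ⌈i / k⌉ = k α (α - 1) / 2 + α (k - 1)`; removing the last term `⌈r / k⌉ = α`
(this needs `k ≥ 2`, i.e. `α < r + 1`) and adding the Gauss sum `m r (r - 1) / 2` gives the formula.
-/

open Finset

theorem Finset.sum_range_intCast_mul_two (n : ℕ) : (∑ i ∈ range n, (i : ℤ)) * 2 = n * (n - 1) := by
  induction n with
  | zero => simp
  | succ n ih =>
    rw [sum_range_succ, add_mul, ih]
    push_cast
    ring

section CeilDiv

variable {K : Type*} [Field K] [LinearOrder K] [IsStrictOrderedRing K] [FloorRing K]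

theorem Int.ceil_natCast_div_eq_one {i k : ℕ} (hi : 0 < i) (hik : i ≤ k) :
    ⌈(i : K) / k⌉ = 1 := by
  have hk : (0 : K) < k := by exact_mod_cast hi.trans_le hik
  rw [Int.ceil_eq_iff]
  constructor
  · norm_num
    positivity
  · rw [Int.cast_one, div_le_one hk]
    exact_mod_cast hik

theorem Int.ceil_natCast_mul_add_div {k : ℕ} (hk : k ≠ 0) (a i : ℕ) :
    ⌈((a * k + i : ℕ) : K) / k⌉ = a + ⌈(i : K) / k⌉ := by
  have hk' : (k : K) ≠ 0 := by exact_mod_cast hk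
  have h : ((a * k + i : ℕ) : K) / k = (i : K) / k + (a : ℤ) := by
    push_cast
    field_simp
    ring
  rw [h, Int.ceil_add_intCast, add_comm]

theorem sum_range_ceil_natCast_mul_add_div {k : ℕ} (hk : 0 < k) (a : ℕ) :
    ∑ j ∈ range k, ⌈((a * k + j : ℕ) : K) / k⌉ = a * k + k - 1 := by
  obtain ⟨n, rfl⟩ : ∃ n, k = n + 1 := ⟨k - 1, by omega⟩
  have h_succ : ∀ j ∈ range n,
      ⌈((a * (n + 1) + (j + 1) : ℕ) : K) / ((n + 1 : ℕ) : K)⌉ = a + 1 := fun j hj ↦ by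
    rw [Int.ceil_natCast_mul_add_div n.succ_ne_zero,
      Int.ceil_natCast_div_eq_one j.succ_pos (Nat.succ_le_succ (mem_range.mp hj).le)]
  rw [sum_range_succ', sum_congr rfl h_succ, Int.ceil_natCast_mul_add_div n.succ_ne_zero a 0]
  simp only [sum_const, card_range, nsmul_eq_mul, Nat.cast_zero, zero_div, Int.ceil_zero]
  push_cast
  ring

theorem two_mul_sum_range_ceil_natCast_div {k : ℕ} (hk : 0 < k) (a : ℕ) :
    2 * ∑ i ∈ range (a * k), ⌈(i : K) / k⌉ = k * a * (a - 1) + 2 * a * (k - 1) := by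
  induction a with
  | zero => simp
  | succ a ih =>
    rw [Nat.succ_mul, sum_range_add, mul_add, ih, sum_range_ceil_natCast_mul_add_div hk]
    push_cast
    ring

theorem Int.ceil_natCast_mul_add_mul_div_mul (i m : ℕ) {α k : ℕ} (hα : α ≠ 0) (hk : k ≠ 0) :
    ⌈(i : K) * (α + m * (α * k)) / (α * k)⌉ = i * m + ⌈(i : K) / k⌉ := by
  have h : (i : K) * (α + m * (α * k)) / (α * k) = (i : K) / k + ((i * m : ℕ) : ℤ) := by
    field_simp
    push_cast
    ring
  rw [h, Int.ceil_add_intCast, add_comm]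
  push_cast
  rfl

theorem two_mul_sum_range_ceil_natCast_div_of_succ_eq_mul {α k r : ℕ} (hk : 1 < k)
    (hr : r + 1 = α * k) :
    2 * ∑ i ∈ range r, ⌈(i : K) / k⌉ = k * α * (α - 1) + 2 * α * (k - 1) - 2 * α := by
  obtain ⟨b, rfl⟩ : ∃ b, α = b + 1 :=
    Nat.exists_eq_succ_of_ne_zero (by rintro rfl; simp at hr)
  have hr' : r = b * k + (k - 1) := by
    rw [add_mul, one_mul] at hr
    omega
  have h_last : ⌈(r : K) / k⌉ = b + 1 := by
    rw [hr', Int.ceil_natCast_mul_add_div (by omega),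
      Int.ceil_natCast_div_eq_one (by omega) (by omega)]
  have h := two_mul_sum_range_ceil_natCast_div (K := K) (by omega : 0 < k) (b + 1)
  rw [← hr, sum_range_succ, h_last] at h
  push_cast at h ⊢
  linarith

end CeilDiv

theorem stmt_14_general (m α r : ℕ) (hdvd : α ∣ (r + 1)) (hlt : α < r + 1) :
    (∑ i ∈ Finset.range r,
        ⌈((i : ℚ) * ((α : ℚ) + (m : ℚ) * ((r : ℚ) + 1))) / ((r : ℚ) + 1)⌉)
      = ((α : ℤ) + 1) * ((r : ℤ) + 1) / 2 - 2 * (α : ℤ)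
        + (m : ℤ) * ((r : ℤ) * ((r : ℤ) - 1)) / 2 := by
  obtain ⟨k, hk⟩ := hdvd
  have hk_one : 1 < k := by
    by_contra! h
    interval_cases k <;> omega
  have hα : α ≠ 0 := by
    rintro rfl
    omega
  have hrq : (r : ℚ) + 1 = α * k := by exact_mod_cast hk
  have hrz : (r : ℤ) + 1 = α * k := by exact_mod_cast hk
  rw [hrq]
  simp_rw [Int.ceil_natCast_mul_add_mul_div_mul _ m hα (by omega : k ≠ 0)]
  rw [sum_add_distrib, ← sum_mul]
  have hS := two_mul_sum_range_ceil_natCast_div_of_succ_eq_mul (K := ℚ) hk_one hk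
  have h_first : ((α : ℤ) + 1) * (r + 1) = 2 * (∑ i ∈ range r, ⌈(i : ℚ) / k⌉ + 2 * α) := by
    rw [hrz]
    linear_combination -hS
  have h_gauss : (m : ℤ) * (r * (r - 1)) = 2 * ((∑ i ∈ range r, (i : ℤ)) * m) := by
    rw [← sum_range_intCast_mul_two]
    ring
  rw [h_first, h_gauss, Int.mul_ediv_cancel_left _ two_ne_zero,
    Int.mul_ediv_cancel_left _ two_ne_zero]
  ring

/-- for `m ≥ 0` and positive integers `α, r` with `α ∣ (r+1)` and
`α < r+1`, the sum `Σ_{i=0}^{r-1} ⌈i(α + m(r+1))/(r+1)⌉` equals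
`(α+1)(r+1)/2 - 2α + m·r(r-1)/2`. -/
theorem stmt_14 (m α r : ℕ) (hα : 0 < α) (hr : 0 < r)
    (hdvd : α ∣ (r + 1)) (hlt : α < r + 1) :
    (∑ i ∈ Finset.range r,
        ⌈((i : ℚ) * ((α : ℚ) + (m : ℚ) * ((r : ℚ) + 1))) / ((r : ℚ) + 1)⌉)
      = ((α : ℤ) + 1) * ((r : ℤ) + 1) / 2 - 2 * (α : ℤ)
        + (m : ℤ) * ((r : ℤ) * ((r : ℤ) - 1)) / 2 :=
  stmt_14_general m α r hdvd hlt
end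

section
/- Let E be an elliptic curve over the finite field F_q given by a smooth Weierstrass equation y² + a₁xy + a₃y = x³ + a₂x² + a₄x + a₆, with group of F_q-rational points E(F_q) (identity O the point at infinity). Let r ≥ 2 be an integer and let V_r ⊆ F_q[X,Y] be the F_q-span of the monomials X^i with 2i ≤ r together with the monomials X^iY with 2i + 3 ≤ r (so dim V_r = r). Let P_1, …, P_{r+1} be pairwise distinct affine F_q-points of E, none of which is 2-torsion (2P_j ≠ O for every j), and suppose P_1 + ⋯ + P_{r+1} is 2-torsion in E(F_q). Then for every index j₀ ∈ {1,…,r+1}, the linear evaluation map V_r → F_q^r sending f to the tuple (f(x(P_j), y(P_j)))_{j ≠ j₀} is bijective; in particular, if two elements of V_r agree at the r points P_j, j ≠ j₀, they also agree at P_{j₀}. -/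
/-!
A nonzero `f = a(X) + b(X) Y` in `V_r` has norm `N(f) ∈ F[X]` of degree
`max (2 deg a) (2 deg b + 3) ≤ r`, and this degree is the `F`-dimension of `F[E] ⧸ (f)`.
If `f` vanishes at `r` distinct points, `(f)` lies in the product of their pairwise coprime
maximal ideals of codimension one, whose quotient already has dimension `r`; so `(f)` is that
product, the sum of the points is trivial in the class group of `F[E]`, hence zero in `E(F)`.
For the `r` points other than `P_{j₀}` this makes `P_{j₀}` equal to the 2-torsion sum of all
`r + 1` points, which is excluded. So evaluation at those points is injective on `V_r`, and
bijective since `dim V_r = r`.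
-/

open Polynomial WeierstrassCurve.Affine WeierstrassCurve.Affine.CoordinateRing
open scoped Polynomial.Bivariate nonZeroDivisors
open Function

theorem Ideal.eq_iInf_of_finrank_quotient_le {F R ι : Type*} [Field F] [CommRing R] [Algebra F R]
    [Fintype ι] {I : Ideal R} {M : ι → Ideal R} [FiniteDimensional F (R ⧸ I)]
    (hM : Pairwise (IsCoprime on M)) (hM1 : ∀ i, Module.finrank F (R ⧸ M i) = 1)
    (hIM : ∀ i, I ≤ M i) (hdim : Module.finrank F (R ⧸ I) ≤ Fintype.card ι) :
    I = ⨅ i, M i := by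
  have : ∀ i, FiniteDimensional F (R ⧸ M i) := fun i => Module.finite_of_finrank_eq_succ (hM1 i)
  let L : (R ⧸ I) →ₗ[F] ((i : ι) → R ⧸ M i) :=
    LinearMap.pi fun i => (Ideal.Quotient.factorₐ F (hIM i)).toLinearMap
  have hsurj : Surjective L := fun v => by
    obtain ⟨c, hc⟩ := Ideal.pi_quotient_surjective hM v
    exact ⟨Ideal.Quotient.mk I c, funext hc⟩
  have hrank : Module.finrank F ((i : ι) → R ⧸ M i) = Fintype.card ι := by
    simp [Module.finrank_pi_fintype, hM1]
  have hinj : Injective L :=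
    (LinearMap.injective_iff_surjective_of_finrank_eq_finrank (le_antisymm (hdim.trans hrank.ge)
      (LinearMap.finrank_le_finrank_of_surjective hsurj))).mpr hsurj
  refine le_antisymm (le_iInf hIM) fun c hc => ?_
  rw [← Ideal.Quotient.eq_zero_iff_mem]
  refine hinj ((funext fun i => ?_).trans (map_zero L).symm)
  exact Ideal.Quotient.eq_zero_iff_mem.mpr (Ideal.mem_iInf.mp hc i)

theorem LinearMap.bijective_domRestrict_of_finrank_eq {K M N : Type*} [Field K] [AddCommGroup M]
    [Module K M] [AddCommGroup N] [Module K N] [FiniteDimensional K N] {V : Submodule K M}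
    {L : M →ₗ[K] N} (hdim : Module.finrank K V = Module.finrank K N)
    (hV : ∀ f ∈ V, L f = 0 → f = 0) : Bijective (L.domRestrict V) := by
  have hinj : Injective (L.domRestrict V) := by
    rw [LinearMap.injective_domRestrict_iff, Submodule.disjoint_def]
    exact hV
  have := Module.Finite.of_injective _ hinj
  exact ⟨hinj, (LinearMap.injective_iff_surjective_of_finrank_eq_finrank hdim).mp hinj⟩

theorem Ideal.finiteDimensional_quotient_of_basis {F S ι : Type*} [Field F] [CommRing S]
    [IsDomain S] [Algebra F[X] S] [Algebra F S] [IsScalarTower F F[X] S] [Finite ι]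
    (b : Module.Basis ι F[X] S) {I : Ideal S} (hI : I ≠ ⊥) : FiniteDimensional F (S ⧸ I) :=
  Module.Finite.equiv ((I.quotientEquivPiSpan b hI).restrictScalars F).symm

namespace Polynomial

lemma two_nsmul_degree_add_le_of_mem_degreeLT {R : Type*} [CommRing R] {p : R[X]} {m k r : ℕ}
    (hp : p ∈ degreeLT R m) (h : ∀ n < m, 2 * n + k ≤ r) : 2 • p.degree + k ≤ r := by
  rcases eq_or_ne p 0 with rfl | hp0
  · simp
  · have := h _ ((natDegree_lt_iff_degree_lt hp0).mpr (mem_degreeLT.mp hp))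
    rw [degree_eq_natDegree hp0, two_nsmul]
    exact_mod_cast (by omega : p.natDegree + p.natDegree + k ≤ r)

lemma map_degreeLT_le {R M : Type*} [CommRing R] [AddCommGroup M] [Module R M]
    (f : R[X] →ₗ[R] M) {p : Submodule R M} {n : ℕ} (h : ∀ i < n, f (X ^ i) ∈ p) :
    (degreeLT R n).map f ≤ p := by
  classical
  rw [Submodule.map_le_iff_le_comap, degreeLT_eq_span_X_pow, Submodule.span_le]
  intro q hq
  obtain ⟨i, hi, rfl⟩ := Finset.mem_image.mp hq
  exact h i (Finset.mem_range.mp hi)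

namespace Bivariate

variable {R : Type*} [CommRing R]

lemma eval_equivMvPolynomial (x y : R) (p : R[X][Y]) :
    MvPolynomial.eval ![x, y] (equivMvPolynomial R p) = p.evalEval x y := by
  rw [← coe_aevalAeval_eq_evalEval, ← MvPolynomial.coe_aeval_eq_eval]
  exact congrArg (· p) (show (MvPolynomial.aeval ![x, y]).comp (equivMvPolynomial R).toAlgHom =
    aevalAeval x y by ext <;> simp)

noncomputable def linearInY : R[X] × R[X] →ₗ[R] R[X][Y] where
  toFun ab := C ab.1 + C ab.2 * Y
  map_add' u v := by simp only [Prod.fst_add, Prod.snd_add, map_add]; ring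
  map_smul' c u := by
    simp only [Prod.smul_fst, Prod.smul_snd, RingHom.id_apply, smul_add, ← smul_mul_assoc, smul_C]

lemma linearInY_apply (a b : R[X]) : linearInY (a, b) = C a + C b * Y := rfl

lemma linearInY_injective : Injective (linearInY (R := R)) := by
  rw [← LinearMap.ker_eq_bot, LinearMap.ker_eq_bot']
  rintro ⟨a, b⟩ h
  have h0 := congrArg (coeff · 0) h
  have h1 := congrArg (coeff · 1) h
  simp only [linearInY_apply, coeff_add, coeff_C_mul_X, coeff_C, coeff_zero] at h0 h1
  simp_all

end Bivariate
end Polynomial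

section LSpace

open Polynomial.Bivariate

variable (R : Type*) [CommRing R]

/-- `V_r = L(r O)`, spanned by the monomials `X^i Y^j` (`j ≤ 1`) of pole order `2i + 3j ≤ r`
at `O`. -/
noncomputable def lSpace (r : ℕ) : Submodule R (MvPolynomial (Fin 2) R) :=
  Submodule.span R
    ({p : MvPolynomial (Fin 2) R | ∃ i : ℕ, 2 * i ≤ r ∧ p = MvPolynomial.X 0 ^ i} ∪
      {p : MvPolynomial (Fin 2) R | ∃ i : ℕ, 2 * i + 3 ≤ r ∧
        p = MvPolynomial.X 0 ^ i * MvPolynomial.X 1})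

noncomputable def lSpaceParam (r : ℕ) :
    degreeLT R (r / 2 + 1) × degreeLT R ((r - 1) / 2) →ₗ[R] MvPolynomial (Fin 2) R :=
  (equivMvPolynomial R).toLinearMap ∘ₗ linearInY ∘ₗ
    (degreeLT R _).subtype.prodMap (degreeLT R _).subtype

variable {R}

lemma lSpaceParam_apply (r : ℕ) (a b) :
    lSpaceParam R r (a, b) = equivMvPolynomial R (linearInY ((a : R[X]), (b : R[X]))) := rfl

lemma lSpaceParam_injective (r : ℕ) : Injective (lSpaceParam R r) :=
  (equivMvPolynomial R).injective.comp <| linearInY_injective.comp <|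
    Prod.map_injective.mpr ⟨Subtype.val_injective, Subtype.val_injective⟩

lemma lSpace_eq_range [Nontrivial R] (r : ℕ) : lSpace R r = LinearMap.range (lSpaceParam R r) := by
  classical
  refine le_antisymm (Submodule.span_le.mpr ?_) ?_
  · rintro _ (⟨i, hi, rfl⟩ | ⟨i, hi, rfl⟩)
    · refine ⟨(⟨X ^ i, mem_degreeLT.mpr ?_⟩, 0), by simp [lSpaceParam_apply, linearInY_apply]⟩
      rw [degree_X_pow]
      exact_mod_cast (by omega : i < r / 2 + 1)
    · refine ⟨(0, ⟨X ^ i, mem_degreeLT.mpr ?_⟩), by simp [lSpaceParam_apply, linearInY_apply]⟩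
      rw [degree_X_pow]
      exact_mod_cast (by omega : i < (r - 1) / 2)
  · rintro _ ⟨⟨⟨a, ha⟩, ⟨b, hb⟩⟩, rfl⟩
    show equivMvPolynomial R (linearInY (a, b)) ∈ lSpace R r
    rw [← add_zero a, ← zero_add b, ← Prod.mk_add_mk, map_add, map_add]
    refine Submodule.add_mem _
      (map_degreeLT_le ((equivMvPolynomial R).toLinearMap ∘ₗ linearInY ∘ₗ
        LinearMap.inl R R[X] R[X]) (fun i hi => ?_) ⟨a, ha, rfl⟩)
      (map_degreeLT_le ((equivMvPolynomial R).toLinearMap ∘ₗ linearInY ∘ₗ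
        LinearMap.inr R R[X] R[X]) (fun i hi => ?_) ⟨b, hb, rfl⟩)
    · exact Submodule.subset_span (Or.inl ⟨i, by omega, by simp [linearInY_apply]⟩)
    · exact Submodule.subset_span (Or.inr ⟨i, by omega, by simp [linearInY_apply]⟩)

lemma finrank_lSpace [Nontrivial R] {r : ℕ} (hr : 1 ≤ r) : Module.finrank R (lSpace R r) = r := by
  rw [lSpace_eq_range, LinearMap.finrank_range_of_inj (lSpaceParam_injective r),
    Module.finrank_prod, (degreeLTEquiv R _).finrank_eq, (degreeLTEquiv R _).finrank_eq,
    Module.finrank_fin_fun, Module.finrank_fin_fun]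
  omega

end LSpace

namespace WeierstrassCurve.Affine

open Polynomial.Bivariate

variable {F : Type*} [Field F] {W : WeierstrassCurve.Affine F}

namespace CoordinateRing

noncomputable def pointEval {x y : F} (h : W.Equation x y) : W.CoordinateRing →+* F :=
  AdjoinRoot.evalEval h

lemma pointEval_mk {x y : F} (h : W.Equation x y) (p : F[X][Y]) :
    pointEval h (mk W p) = p.evalEval x y :=
  AdjoinRoot.evalEval_mk h p

lemma XYIdeal_le_ker_pointEval {x y : F} (h : W.Equation x y) :
    XYIdeal W x (C y) ≤ RingHom.ker (pointEval h) := by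
  rw [XYIdeal, Ideal.span_le]
  rintro _ (rfl | rfl)
  · rw [SetLike.mem_coe, RingHom.mem_ker, XClass, pointEval_mk]
    simp [evalEval]
  · rw [SetLike.mem_coe, RingHom.mem_ker, YClass, pointEval_mk]
    simp [evalEval]

lemma isMaximal_XYIdeal {x y : F} (h : W.Equation x y) : (XYIdeal W x (C y)).IsMaximal :=
  Ideal.Quotient.maximal_of_isField _ <|
    (quotientXYIdealEquiv h).toMulEquiv.isField (Field.toIsField F)

lemma ker_pointEval {x y : F} (h : W.Equation x y) :
    RingHom.ker (pointEval h) = XYIdeal W x (C y) :=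
  ((isMaximal_XYIdeal h).eq_of_le (RingHom.ker_ne_top _) (XYIdeal_le_ker_pointEval h)).symm

lemma finrank_quotient_XYIdeal {x y : F} (h : W.Equation x y) :
    Module.finrank F (W.CoordinateRing ⧸ XYIdeal W x (C y)) = 1 := by
  rw [(quotientXYIdealEquiv h).toLinearEquiv.finrank_eq, Module.finrank_self]

lemma isCoprime_XYIdeal {x₁ y₁ x₂ y₂ : F} (h₁ : W.Equation x₁ y₁) (h₂ : W.Equation x₂ y₂)
    (hne : (x₁, y₁) ≠ (x₂, y₂)) : IsCoprime (XYIdeal W x₁ (C y₁)) (XYIdeal W x₂ (C y₂)) := by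
  have := isMaximal_XYIdeal h₁
  have := isMaximal_XYIdeal h₂
  refine Ideal.isCoprime_of_isMaximal fun heq => hne ?_
  have hX : XClass W x₁ ∈ RingHom.ker (pointEval h₂) :=
    ker_pointEval h₂ ▸ heq ▸ Ideal.subset_span (Set.mem_insert _ _)
  have hY : YClass W (C y₁) ∈ RingHom.ker (pointEval h₂) :=
    ker_pointEval h₂ ▸ heq ▸ Ideal.subset_span (Set.mem_insert_of_mem _ rfl)
  simp only [RingHom.mem_ker, XClass, YClass, pointEval_mk] at hX hY
  simp only [evalEval, eval_sub, eval_X, eval_C, sub_eq_zero] at hX hY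
  exact Prod.ext hX.symm hY.symm

lemma mk_linearInY (a b : F[X]) : mk W (linearInY (a, b)) = a • 1 + b • mk W Y := by
  simp [linearInY_apply, CoordinateRing.smul]

end CoordinateRing

namespace Point

variable [DecidableEq F]

lemma sum_eq_zero_of_prod_XYIdeal_eq_span {ι : Type*} [Fintype ι] {x y : ι → F}
    (hns : ∀ i, W.Nonsingular (x i) (y i)) {f : W.CoordinateRing} (hf : f ≠ 0)
    (h : ∏ i, XYIdeal W (x i) (C (y i)) = Ideal.span {f}) : ∑ i, some _ _ (hns i) = 0 := by
  have hclass : toClass (∑ i, some _ _ (hns i)) =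
      Additive.ofMul (ClassGroup.mk W.FunctionField (∏ i, XYIdeal' (hns i))) := by
    rw [map_sum, map_prod, ofMul_prod]
    rfl
  have hcoe : ((∏ i, XYIdeal' (hns i) : (FractionalIdeal W.CoordinateRing⁰ W.FunctionField)ˣ) :
      FractionalIdeal W.CoordinateRing⁰ W.FunctionField) = ↑(∏ i, XYIdeal W (x i) (C (y i))) := by
    rw [Units.coe_prod]
    exact (map_prod (FractionalIdeal.coeIdealHom _ _) _ _).symm
  rw [← toClass_eq_zero, hclass, ofMul_eq_zero, ClassGroup.mk_eq_one_of_coe_ideal hcoe]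
  exact ⟨f, hf, h⟩

theorem sum_eq_zero_of_forall_pointEval_eq_zero {ι : Type*} [Fintype ι] {x y : ι → F}
    (hns : ∀ i, W.Nonsingular (x i) (y i)) (hxy : Injective fun i => (x i, y i))
    {f : W.CoordinateRing} (hf : f ≠ 0)
    (hdeg : (Algebra.norm F[X] f).natDegree ≤ Fintype.card ι)
    (hvan : ∀ i, pointEval (hns i).1 f = 0) : ∑ i, some _ _ (hns i) = 0 := by
  have := Ideal.finiteDimensional_quotient_of_basis (F := F) (CoordinateRing.basis W)
    (Ideal.span_singleton_eq_bot.not.mpr hf)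
  have hcop : Pairwise (IsCoprime on fun i => XYIdeal W (x i) (C (y i))) := fun i j hij =>
    isCoprime_XYIdeal (hns i).1 (hns j).1 (hxy.ne hij)
  refine sum_eq_zero_of_prod_XYIdeal_eq_span hns hf ?_
  rw [Ideal.prod_eq_iInf_of_pairwise_isCoprime (hcop.set_pairwise _)]
  simp only [Finset.mem_univ, iInf_pos]
  refine (Ideal.eq_iInf_of_finrank_quotient_le hcop (fun i => finrank_quotient_XYIdeal (hns i).1)
    (fun i => ?_) ?_).symm
  · rw [Ideal.span_le, Set.singleton_subset_iff, ← ker_pointEval (hns i).1]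
    exact hvan i
  · rwa [finrank_quotient_span_eq_natDegree_norm (CoordinateRing.basis W) hf]

end Point

theorem eq_zero_of_mem_lSpace_of_forall_eval_eq_zero [DecidableEq F] {ι : Type*} [Fintype ι] {r : ℕ}
    (hr : r ≤ Fintype.card ι) {P : ι → F × F} (hP : Injective P)
    (hns : ∀ i, W.Nonsingular (P i).1 (P i).2) (hsum : ∑ i, Point.some _ _ (hns i) ≠ 0)
    {f : MvPolynomial (Fin 2) F} (hf : f ∈ lSpace F r)
    (hvan : ∀ i, MvPolynomial.eval ![(P i).1, (P i).2] f = 0) : f = 0 := by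
  rw [lSpace_eq_range] at hf
  obtain ⟨⟨⟨a, ha⟩, ⟨b, hb⟩⟩, rfl⟩ := hf
  by_contra hne
  refine hsum (Point.sum_eq_zero_of_forall_pointEval_eq_zero hns hP
    (f := CoordinateRing.mk W (linearInY (a, b))) ?_ ?_ fun i => ?_)
  · rw [mk_linearInY]
    intro h
    obtain ⟨rfl, rfl⟩ := smul_basis_eq_zero h
    exact hne (map_zero (lSpaceParam F r))
  · rw [mk_linearInY, natDegree_le_iff_degree_le, degree_norm_smul_basis]
    refine (max_le ?_ ?_).trans (Nat.cast_le.mpr hr)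
    · simpa using two_nsmul_degree_add_le_of_mem_degreeLT (k := 0) ha fun n hn => by omega
    · simpa using two_nsmul_degree_add_le_of_mem_degreeLT (k := 3) hb fun n hn => by omega
  · rw [pointEval_mk, ← eval_equivMvPolynomial]
    exact hvan i

end WeierstrassCurve.Affine

open scoped Classical in
theorem stmt_16_general (F : Type) [Field F]
    (W : WeierstrassCurve F)
    (r : ℕ) (hr : 2 ≤ r)
    (P : Fin (r + 1) → F × F) (hPinj : Function.Injective P)
    (hns : ∀ j, W.toAffine.Nonsingular (P j).1 (P j).2)
    -- no P_j is 2-torsion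
    (h2 : ∀ j, 2 • (WeierstrassCurve.Affine.Point.some _ _ (hns j)) ≠
      (0 : W.toAffine.Point))
    -- P_1 + ⋯ + P_{r+1} is 2-torsion
    (hsum : 2 • (∑ j, WeierstrassCurve.Affine.Point.some _ _ (hns j)) =
      (0 : W.toAffine.Point)) :
    ∀ j₀ : Fin (r + 1),
      Function.Bijective
        (fun f : (Submodule.span F
            ({p : MvPolynomial (Fin 2) F | ∃ i : ℕ, 2 * i ≤ r ∧
                p = MvPolynomial.X 0 ^ i} ∪
             {p : MvPolynomial (Fin 2) F | ∃ i : ℕ, 2 * i + 3 ≤ r ∧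
                p = MvPolynomial.X 0 ^ i * MvPolynomial.X 1})) =>
          fun j : {j : Fin (r + 1) // j ≠ j₀} =>
            MvPolynomial.eval ![(P j).1, (P j).2] (f : MvPolynomial (Fin 2) F)) ∧
      ∀ f g : MvPolynomial (Fin 2) F,
        f ∈ Submodule.span F
            ({p : MvPolynomial (Fin 2) F | ∃ i : ℕ, 2 * i ≤ r ∧
                p = MvPolynomial.X 0 ^ i} ∪
             {p : MvPolynomial (Fin 2) F | ∃ i : ℕ, 2 * i + 3 ≤ r ∧
                p = MvPolynomial.X 0 ^ i * MvPolynomial.X 1}) →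
        g ∈ Submodule.span F
            ({p : MvPolynomial (Fin 2) F | ∃ i : ℕ, 2 * i ≤ r ∧
                p = MvPolynomial.X 0 ^ i} ∪
             {p : MvPolynomial (Fin 2) F | ∃ i : ℕ, 2 * i + 3 ≤ r ∧
                p = MvPolynomial.X 0 ^ i * MvPolynomial.X 1}) →
        (∀ j : Fin (r + 1), j ≠ j₀ →
          MvPolynomial.eval ![(P j).1, (P j).2] f
            = MvPolynomial.eval ![(P j).1, (P j).2] g) →
        MvPolynomial.eval ![(P j₀).1, (P j₀).2] f
          = MvPolynomial.eval ![(P j₀).1, (P j₀).2] g := by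
  intro j₀
  have hcard : Fintype.card {j : Fin (r + 1) // j ≠ j₀} = r := by
    simp [Fintype.card_subtype_compl]
  have hrest : ∑ j : {j // j ≠ j₀}, Point.some _ _ (hns j) ≠ 0 := fun h0 => by
    rw [← Fintype.sum_subtype_add_sum_subtype (· = j₀)] at hsum
    simp only [h0, add_zero, Fintype.sum_unique] at hsum
    exact h2 j₀ hsum
  have hvan : ∀ f ∈ lSpace F r,
      (∀ j : {j // j ≠ j₀}, MvPolynomial.eval ![(P j).1, (P j).2] f = 0) → f = 0 :=
    fun f hf => eq_zero_of_mem_lSpace_of_forall_eval_eq_zero hcard.ge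
      (hPinj.comp Subtype.val_injective) (fun j => hns j) hrest hf
  refine ⟨LinearMap.bijective_domRestrict_of_finrank_eq (V := lSpace F r)
    (L := LinearMap.pi fun j : {j // j ≠ j₀} =>
      (MvPolynomial.aeval ![(P j).1, (P j).2]).toLinearMap) ?_
    fun f hf hLf => hvan f hf fun j => congrFun hLf j, fun f g hf hg hfg => ?_⟩
  · rw [finrank_lSpace (by omega), Module.finrank_fintype_fun_eq_card, hcard]
  · rw [sub_eq_zero.mp (hvan (f - g) (sub_mem hf hg) fun j => by simp [hfg j j.2])]

open scoped Classical in
/-- let `E` be an elliptic curve over `F_q` given by a smooth Weierstrass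
equation, let `V_r ⊆ F_q[X,Y]` be the span of the monomials `X^i` with `2i ≤ r` and
`X^i·Y` with `2i + 3 ≤ r` (the functions of `L(E, rO)`), and let `P_1, …, P_{r+1}` be
pairwise distinct affine rational points of `E`, none of them 2-torsion, whose sum is
2-torsion.  Then for every `j₀` the evaluation map `V_r → F_q^r` at the points `P_j`,
`j ≠ j₀`, is bijective; in particular two elements of `V_r` agreeing at the `P_j`,
`j ≠ j₀`, also agree at `P_{j₀}`. -/
theorem stmt_16 (F : Type) [Field F] [Fintype F]
    (W : WeierstrassCurve F) (hW : W.Δ ≠ 0)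
    (r : ℕ) (hr : 2 ≤ r)
    (P : Fin (r + 1) → F × F) (hPinj : Function.Injective P)
    (hns : ∀ j, W.toAffine.Nonsingular (P j).1 (P j).2)
    -- no P_j is 2-torsion
    (h2 : ∀ j, 2 • (WeierstrassCurve.Affine.Point.some _ _ (hns j)) ≠
      (0 : W.toAffine.Point))
    -- P_1 + ⋯ + P_{r+1} is 2-torsion
    (hsum : 2 • (∑ j, WeierstrassCurve.Affine.Point.some _ _ (hns j)) =
      (0 : W.toAffine.Point)) :
    ∀ j₀ : Fin (r + 1),
      Function.Bijective
        (fun f : (Submodule.span F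
            ({p : MvPolynomial (Fin 2) F | ∃ i : ℕ, 2 * i ≤ r ∧
                p = MvPolynomial.X 0 ^ i} ∪
             {p : MvPolynomial (Fin 2) F | ∃ i : ℕ, 2 * i + 3 ≤ r ∧
                p = MvPolynomial.X 0 ^ i * MvPolynomial.X 1})) =>
          fun j : {j : Fin (r + 1) // j ≠ j₀} =>
            MvPolynomial.eval ![(P j).1, (P j).2] (f : MvPolynomial (Fin 2) F)) ∧
      ∀ f g : MvPolynomial (Fin 2) F,
        f ∈ Submodule.span F
            ({p : MvPolynomial (Fin 2) F | ∃ i : ℕ, 2 * i ≤ r ∧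
                p = MvPolynomial.X 0 ^ i} ∪
             {p : MvPolynomial (Fin 2) F | ∃ i : ℕ, 2 * i + 3 ≤ r ∧
                p = MvPolynomial.X 0 ^ i * MvPolynomial.X 1}) →
        g ∈ Submodule.span F
            ({p : MvPolynomial (Fin 2) F | ∃ i : ℕ, 2 * i ≤ r ∧
                p = MvPolynomial.X 0 ^ i} ∪
             {p : MvPolynomial (Fin 2) F | ∃ i : ℕ, 2 * i + 3 ≤ r ∧
                p = MvPolynomial.X 0 ^ i * MvPolynomial.X 1}) →
        (∀ j : Fin (r + 1), j ≠ j₀ →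
          MvPolynomial.eval ![(P j).1, (P j).2] f
            = MvPolynomial.eval ![(P j).1, (P j).2] g) →
        MvPolynomial.eval ![(P j₀).1, (P j₀).2] f
          = MvPolynomial.eval ![(P j₀).1, (P j₀).2] g :=
  stmt_16_general F W r hr P hPinj hns h2 hsum
end
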